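/- arXiv:2302.00363 — 9 statements merged into one kernel-verified Lean document; each statement's English description precedes it below -/
import Mathlib

section
/- Let x* ∈ ℝⁿ be a local minimizer for problem (P). Then x* is AKKT-stationary for (P), i.e., there exist sequences xᵏ ∈ ℝⁿ and yᵏ, zᵏ ∈ ℝᵐ such that zᵏ → c(x*) with g(zᵏ) → g(c(x*)), ∇f(xᵏ) + Jc(xᵏ)ᵀ yᵏ → 0, yᵏ ∈ ∂g(zᵏ) for all k, and c(xᵏ) − zᵏ → 0. -/
open Filter Topology Bornology

noncomputable section

variable {H : Type*} [NormedAddCommGroup H] [InnerProductSpace ℝ H]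

/-- The regular (Fréchet) subdifferential of an extended-real-valued function `h` at `x`:
`v` belongs to it iff `h x` is finite and
`liminf_{w → x, w ≠ x} (h w − h x − ⟨v, w − x⟩)/‖w − x‖ ≥ 0`. -/
def regSubdiff (h : H → EReal) (x : H) : Set H :=
  {v | h x ≠ ⊤ ∧ h x ≠ ⊥ ∧ (0 : EReal) ≤
    Filter.liminf
      (fun w => (h w - h x - ((inner ℝ v (w - x) : ℝ) : EReal)) / ((‖w - x‖ : ℝ) : EReal))
      (𝓝[≠] x)}

/-- The limiting (Mordukhovich) subdifferential of `h` at `x`: limits of regular subgradients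
along `h`-attentively convergent sequences. -/
def limSubdiff (h : H → EReal) (x : H) : Set H :=
  {v | ∃ xs vs : ℕ → H,
      Tendsto xs atTop (𝓝 x) ∧ Tendsto (fun k => h (xs k)) atTop (𝓝 (h x)) ∧
      (∀ k, vs k ∈ regSubdiff h (xs k)) ∧ Tendsto vs atTop (𝓝 v)}

/-- The proximal mapping of `g` with parameter `γ` evaluated at `u`, as a set:
`argmin_z { g(z) + ‖z − u‖²/(2γ) }`. -/
def proxSet (g : H → EReal) (γ : ℝ) (u : H) : Set H :=
  {z | ∀ w, g z + ((‖z - u‖ ^ 2 / (2 * γ) : ℝ) : EReal) ≤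
        g w + ((‖w - u‖ ^ 2 / (2 * γ) : ℝ) : EReal)}

/-- `g + ‖·‖²/(2γ)` is bounded below on the whole space. -/
def ProxBoundedAt (g : H → EReal) (γ : ℝ) : Prop :=
  ∃ b : ℝ, ∀ z, (b : EReal) ≤ g z + ((‖z‖ ^ 2 / (2 * γ) : ℝ) : EReal)

/-- `g` is prox-bounded: `g + ‖·‖²/(2γ)` is bounded below for some `γ > 0`. -/
def ProxBounded (g : H → EReal) : Prop :=
  ∃ γ > (0 : ℝ), ProxBoundedAt g γ

/-- The limiting normal cone to `D` at `z`: limits of `λᵏ (vᵏ − wᵏ)` with `λᵏ ≥ 0`,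
`wᵏ` a Euclidean projection of `vᵏ` onto `D`, and `vᵏ → z`. -/
def limNormalCone {H' : Type*} [NormedAddCommGroup H'] [NormedSpace ℝ H']
    (D : Set H') (z : H') : Set H' :=
  {v | ∃ (vs ws : ℕ → H') (ls : ℕ → ℝ), (∀ k, 0 ≤ ls k) ∧
      (∀ k, ws k ∈ D ∧ ∀ u ∈ D, ‖ws k - vs k‖ ≤ ‖u - vs k‖) ∧
      Tendsto vs atTop (𝓝 z) ∧ Tendsto (fun k => ls k • (vs k - ws k)) atTop (𝓝 v)}


/-!
Relax the constraint `z = c x` by a quadratic penalty of weight `1 / (2γ)` and localize at `x*`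
with the proximal term `‖x - x*‖²`. On `closedBall x* δ × ℝᵐ` the relaxed problem has a minimizer
`(xₖ, zₖ)` for every small `γₖ`: prox-boundedness of `g` makes it coercive in `z`. Minimality in `z`
says that `zₖ` is a proximal point of `g` at `c xₖ`, so `yₖ = (c xₖ - zₖ) / γₖ` is a regular
subgradient of `g` at `zₖ`. As `γₖ → 0` the penalty forces `zₖ - c xₖ → 0`, and lower
semicontinuity together with the local minimality of `x*` leaves `x*` as the only possible limit of
`xₖ`. Once `xₖ` lies in the open ball, minimality in `x` is a smooth first-order condition:
`∇f(xₖ) + Jc(xₖ)ᵀ yₖ = -2 (xₖ - x*) → 0`.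
-/

open Set Metric

section Semicontinuity

variable {α β ι : Type*} [TopologicalSpace α] [LinearOrder β] [TopologicalSpace β]
  [OrderTopology β] {g : α → β} {l : Filter ι} {z : ι → α} {z₀ : α} {B : ι → β} {b : β}

theorem LowerSemicontinuousAt.tendsto_of_le_of_tendsto (hg : LowerSemicontinuousAt g z₀)
    (hz : Tendsto z l (𝓝 z₀)) (hB : Tendsto B l (𝓝 (g z₀))) (hle : ∀ᶠ k in l, g (z k) ≤ B k) :
    Tendsto (fun k => g (z k)) l (𝓝 (g z₀)) :=
  tendsto_order.2 ⟨fun _ hy => hz.eventually (hg _ hy), fun _ hy =>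
    (hB.eventually (eventually_lt_nhds hy)).mp (hle.mono fun _ h₁ h₂ => h₁.trans_lt h₂)⟩

theorem LowerSemicontinuousAt.le_of_tendsto_of_le [DenselyOrdered β] [l.NeBot]
    (hg : LowerSemicontinuousAt g z₀) (hz : Tendsto z l (𝓝 z₀)) (hB : Tendsto B l (𝓝 b))
    (hle : ∀ᶠ k in l, g (z k) ≤ B k) : g z₀ ≤ b := by
  by_contra! hlt
  obtain ⟨y, hby, hyg⟩ := exists_between hlt
  obtain ⟨k, hgk, hk, hBk⟩ := ((hz.eventually (hg y hyg)).and
    (hle.and (hB.eventually (eventually_lt_nhds hby)))).exists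
  exact lt_asymm (hgk.trans_le hk) hBk

end Semicontinuity

theorem LowerSemicontinuous.exists_isMinOn_of_isBounded {X β : Type*} [PseudoMetricSpace X]
    [ProperSpace X] [LinearOrder β] [TopologicalSpace β] [ClosedIicTopology β] {φ : X → β}
    (hφ : LowerSemicontinuous φ) {s : Set X} (hs : IsClosed s) {a : X} (ha : a ∈ s)
    (hbdd : Bornology.IsBounded {x ∈ s | φ x ≤ φ a}) : ∃ p ∈ s, IsMinOn φ s p := by
  have hK : IsCompact {x ∈ s | φ x ≤ φ a} :=
    isCompact_of_isClosed_isBounded (hs.inter (hφ.isClosed_preimage (φ a))) hbdd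
  obtain ⟨p, ⟨hps, hpa⟩, hp⟩ :=
    (hφ.lowerSemicontinuousOn _).exists_isMinOn (s := {x ∈ s | φ x ≤ φ a}) ⟨a, ha, le_rfl⟩ hK
  refine ⟨p, hps, fun x hx => ?_⟩
  rcases le_total (φ x) (φ a) with hxa | hax
  · exact hp ⟨hx, hxa⟩
  · exact hpa.trans hax

theorem regSubdiff_subset_limSubdiff (h : H → EReal) (x : H) :
    regSubdiff h x ⊆ limSubdiff h x := fun v hv =>
  ⟨fun _ => x, fun _ => v, tendsto_const_nhds, tendsto_const_nhds, fun _ => hv,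
    tendsto_const_nhds⟩

theorem mem_regSubdiff_of_quadratic_minorant {h : H → EReal} {x v : H} {a κ : ℝ}
    (hx : h x = a) (hle : ∀ w, ((a + inner ℝ v (w - x) - κ * ‖w - x‖ ^ 2 : ℝ) : EReal) ≤ h w) :
    v ∈ regSubdiff h x := by
  refine ⟨hx ▸ EReal.coe_ne_top a, hx ▸ EReal.coe_ne_bot a, ?_⟩
  have hbound : ∀ᶠ w in 𝓝[≠] x, ((-(κ * ‖w - x‖) : ℝ) : EReal) ≤
      (h w - h x - ((inner ℝ v (w - x) : ℝ) : EReal)) / ((‖w - x‖ : ℝ) : EReal) := by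
    filter_upwards [self_mem_nhdsWithin] with w hw
    have hpos : 0 < ‖w - x‖ := norm_pos_iff.2 (sub_ne_zero.2 hw)
    have hnum : ((-(κ * ‖w - x‖ ^ 2) : ℝ) : EReal) ≤
        h w - h x - ((inner ℝ v (w - x) : ℝ) : EReal) :=
      calc ((-(κ * ‖w - x‖ ^ 2) : ℝ) : EReal)
          = ((a + inner ℝ v (w - x) - κ * ‖w - x‖ ^ 2 : ℝ) : EReal) - a -
              ((inner ℝ v (w - x) : ℝ) : EReal) := by
            rw [← EReal.coe_sub, ← EReal.coe_sub]; ring_nf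
        _ ≤ _ := hx ▸ EReal.sub_le_sub (EReal.sub_le_sub (hle w) le_rfl) le_rfl
    calc ((-(κ * ‖w - x‖) : ℝ) : EReal)
        = ((-(κ * ‖w - x‖ ^ 2) : ℝ) : EReal) / ((‖w - x‖ : ℝ) : EReal) := by
          rw [← EReal.coe_div]; congr 1; field_simp
      _ ≤ _ := EReal.div_le_div_right_of_nonneg (EReal.coe_nonneg.2 hpos.le) hnum
  have hlim : Tendsto (fun w => ((-(κ * ‖w - x‖) : ℝ) : EReal)) (𝓝[≠] x) (𝓝 0) := by
    have : Tendsto (fun w => -(κ * ‖w - x‖)) (𝓝 x) (𝓝 (-(κ * ‖x - x‖))) :=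
      (continuous_const.mul (continuous_id.sub continuous_const).norm).neg.tendsto x
    rw [sub_self, norm_zero, mul_zero, neg_zero] at this
    exact EReal.tendsto_coe.2 (this.mono_left nhdsWithin_le_nhds)
  rcases (𝓝[≠] x).eq_or_neBot with hbot | _
  · simp [hbot]
  exact hlim.liminf_eq.symm.le.trans (liminf_le_liminf hbound)

theorem mem_regSubdiff_of_mem_proxSet {g : H → EReal} {γ : ℝ} {u z : H} (hγ : γ ≠ 0)
    (hz : z ∈ proxSet g γ u) (htop : g z ≠ ⊤) (hbot : g z ≠ ⊥) :
    γ⁻¹ • (u - z) ∈ regSubdiff g z := by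
  lift g z to ℝ using ⟨htop, hbot⟩ with a ha
  refine mem_regSubdiff_of_quadratic_minorant ha.symm (κ := (2 * γ)⁻¹) fun w => ?_
  have h := (EReal.sub_le_iff_le_add (.inl (EReal.coe_ne_bot _)) (.inl (EReal.coe_ne_top _))).2
    (ha ▸ hz w)
  rw [← EReal.coe_add, ← EReal.coe_sub] at h
  convert h using 2
  rw [show w - u = (w - z) + (z - u) by abel, norm_add_sq_real, real_inner_smul_left,
    show z - u = -(u - z) by abel, inner_neg_right, real_inner_comm]
  field_simp
  ring

section Penalty

variable {E F : Type*} [NormedAddCommGroup E] [NormedAddCommGroup F]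
  {f : E → ℝ} {c : E → F} {g : F → EReal} {x₀ : E} {γ gx : ℝ} {x : ℕ → E} {z : ℕ → F}

def penalty (f : E → ℝ) (c : E → F) (g : F → EReal) (x₀ : E) (γ : ℝ) (p : E × F) : EReal :=
  g p.2 + ((f p.1 + ‖p.2 - c p.1‖ ^ 2 / (2 * γ) + ‖p.1 - x₀‖ ^ 2 : ℝ) : EReal)

theorem penalty_self : penalty f c g x₀ γ (x₀, c x₀) = f x₀ + g (c x₀) := by
  simp [penalty, add_comm]

theorem lowerSemicontinuous_penalty (hf : Continuous f) (hc : Continuous c)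
    (hg : LowerSemicontinuous g) : LowerSemicontinuous (penalty f c g x₀ γ) :=
  (hg.comp continuous_snd).add' (continuous_coe_real_ereal.comp (by fun_prop)).lowerSemicontinuous
    fun _ => EReal.continuousAt_add (.inr (EReal.coe_ne_bot _)) (.inr (EReal.coe_ne_top _))

theorem le_of_penalty_le {x : E} {z : F} {V : ℝ} (hγ : 0 ≤ γ)
    (h : penalty f c g x₀ γ (x, z) ≤ V) :
    g z ≤ ((V - f x - ‖x - x₀‖ ^ 2 : ℝ) : EReal) := by
  have h' := (EReal.le_sub_iff_add_le (.inl (EReal.coe_ne_bot _)) (.inl (EReal.coe_ne_top _))).2 h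
  refine h'.trans (le_of_eq_of_le (EReal.coe_sub _ _).symm (EReal.coe_le_coe_iff.2 ?_))
  have : 0 ≤ ‖z - c x‖ ^ 2 / (2 * γ) := by positivity
  linarith

/-- Prox-boundedness with parameter `γ₀ ≥ 4γ` absorbs half of the penalty. -/
theorem sq_norm_sub_le_of_penalty_le {x : E} {z : F} {γ₀ b V : ℝ}
    (hb : ∀ z, (b : EReal) ≤ g z + ((‖z‖ ^ 2 / (2 * γ₀) : ℝ) : EReal))
    (hγ : 0 < γ) (hγ₀ : 4 * γ ≤ γ₀) (h : penalty f c g x₀ γ (x, z) ≤ V) :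
    ‖z - c x‖ ^ 2 ≤ 4 * γ * (V - b - f x + ‖c x‖ ^ 2 / γ₀) := by
  have h' := (EReal.le_sub_iff_add_le (.inl (EReal.coe_ne_bot _)) (.inl (EReal.coe_ne_top _))).2 h
  have hbV := (hb z).trans (add_le_add_left h' _)
  rw [← EReal.coe_sub, ← EReal.coe_add, EReal.coe_le_coe_iff] at hbV
  have hz : ‖z‖ ^ 2 ≤ 2 * ‖z - c x‖ ^ 2 + 2 * ‖c x‖ ^ 2 := by
    have := norm_add_le (z - c x) (c x)
    rw [sub_add_cancel] at this
    nlinarith [norm_nonneg z, sq_nonneg (‖z - c x‖ - ‖c x‖)]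
  have hγ₀' : 0 < γ₀ := by linarith
  have hcoef : ‖z - c x‖ ^ 2 / γ₀ ≤ ‖z - c x‖ ^ 2 / (4 * γ) :=
    div_le_div_of_nonneg_left (sq_nonneg _) (by positivity) hγ₀
  have hsplit : ‖z - c x‖ ^ 2 / (2 * γ) = 2 * (‖z - c x‖ ^ 2 / (4 * γ)) := by
    field_simp; ring
  have hq : ‖z - c x‖ ^ 2 = 4 * γ * (‖z - c x‖ ^ 2 / (4 * γ)) := by field_simp
  have hz' : ‖z‖ ^ 2 / (2 * γ₀) ≤ ‖z - c x‖ ^ 2 / γ₀ + ‖c x‖ ^ 2 / γ₀ := by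
    rw [← add_div, div_le_div_iff₀ (by positivity) hγ₀']; nlinarith
  have := sq_nonneg ‖x - x₀‖
  rw [hq]
  gcongr
  linarith

theorem exists_norm_sub_le_of_penalty_le [ProperSpace E] (hf : Continuous f) (hc : Continuous c)
    {γ₀ : ℝ} (hg : ProxBoundedAt g γ₀) (V δ : ℝ) :
    ∃ C, ∀ γ, 0 < γ → 4 * γ ≤ γ₀ → ∀ p ∈ closedBall x₀ δ ×ˢ univ,
      penalty f c g x₀ γ p ≤ V → ‖p.2 - c p.1‖ ≤ √(γ * C) := by
  obtain ⟨b, hb⟩ := hg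
  obtain ⟨C, hC⟩ := (isCompact_closedBall x₀ δ).bddAbove_image
    (f := fun x => V - b - f x + ‖c x‖ ^ 2 / γ₀) (by fun_prop)
  refine ⟨4 * C, fun γ hγ hγ₀ ⟨x, z⟩ ⟨hx, _⟩ hp => ?_⟩
  have hsq := sq_norm_sub_le_of_penalty_le hb hγ hγ₀ hp
  have hxC := hC (mem_image_of_mem _ hx)
  rw [← abs_norm]
  exact Real.abs_le_sqrt (by nlinarith)

theorem exists_isMinOn_penalty [ProperSpace E] [ProperSpace F] (hf : Continuous f)
    (hc : Continuous c) (hg : LowerSemicontinuous g) {γ₀ : ℝ} (hgb : ProxBoundedAt g γ₀)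
    (hγ : 0 < γ) (hγ₀ : 4 * γ ≤ γ₀) (hfeas : g (c x₀) ≠ ⊤) {δ : ℝ} (hδ : 0 ≤ δ) :
    ∃ p ∈ closedBall x₀ δ ×ˢ univ, IsMinOn (penalty f c g x₀ γ) (closedBall x₀ δ ×ˢ univ) p := by
  have ha : (x₀, c x₀) ∈ closedBall x₀ δ ×ˢ (univ : Set F) := ⟨mem_closedBall_self hδ, trivial⟩
  refine (lowerSemicontinuous_penalty hf hc hg).exists_isMinOn_of_isBounded
    (isClosed_closedBall.prod isClosed_univ) ha ?_
  obtain ⟨C, hC⟩ := exists_norm_sub_le_of_penalty_le (x₀ := x₀) hf hc hgb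
    (f x₀ + (g (c x₀)).toReal) δ
  have hcompact : IsCompact ((fun q : E × F => (q.1, c q.1 + q.2)) ''
      closedBall x₀ δ ×ˢ closedBall 0 √(γ * C)) :=
    ((isCompact_closedBall _ _).prod (isCompact_closedBall _ _)).image (by fun_prop)
  refine hcompact.isBounded.subset fun p ⟨hpS, hp⟩ => ⟨(p.1, p.2 - c p.1), ⟨hpS.1, ?_⟩, ?_⟩
  · rw [mem_closedBall_zero_iff]
    refine hC γ hγ hγ₀ p hpS (hp.trans ?_)
    rw [penalty_self, EReal.coe_add]
    exact add_le_add_right (EReal.le_coe_toReal hfeas) _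
  · simp

theorem mem_proxSet_of_isMinOn_penalty {δ : ℝ} {p : E × F}
    (hp : IsMinOn (penalty f c g x₀ γ) (closedBall x₀ δ ×ˢ univ) p)
    (hp₁ : p.1 ∈ closedBall x₀ δ) : p.2 ∈ proxSet g γ (c p.1) := by
  intro w
  have h := isMinOn_iff.1 hp (p.1, w) ⟨hp₁, trivial⟩
  have hsplit (q : ℝ) : f p.1 + q + ‖p.1 - x₀‖ ^ 2 = q + (f p.1 + ‖p.1 - x₀‖ ^ 2) := by ring
  simp only [penalty] at h
  rw [hsplit, hsplit, EReal.coe_add _ (f p.1 + _), EReal.coe_add _ (f p.1 + _), ← add_assoc,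
    ← add_assoc] at h
  exact (EReal.addLECancellable_coe _).add_le_add_iff_right.1 h

theorem isLocalMin_of_isMinOn_penalty {δ : ℝ} {p : E × F}
    (hp : IsMinOn (penalty f c g x₀ γ) (closedBall x₀ δ ×ˢ univ) p)
    (hp₁ : p.1 ∈ ball x₀ δ) (htop : g p.2 ≠ ⊤) (hbot : g p.2 ≠ ⊥) :
    IsLocalMin (fun x => f x + ‖p.2 - c x‖ ^ 2 / (2 * γ) + ‖x - x₀‖ ^ 2) p.1 := by
  filter_upwards [isOpen_ball.mem_nhds hp₁] with x hx
  have h := isMinOn_iff.1 hp (x, p.2) ⟨ball_subset_closedBall hx, trivial⟩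
  simp only [penalty] at h
  lift g p.2 to ℝ using ⟨htop, hbot⟩ with a
  rw [← EReal.coe_add, ← EReal.coe_add, EReal.coe_le_coe_iff] at h
  linarith

theorem exists_seq_isMinOn_penalty [ProperSpace E] [ProperSpace F] (hf : Continuous f)
    (hc : Continuous c) (hg : LowerSemicontinuous g) {γ₀ : ℝ} (hγ₀ : 0 < γ₀)
    (hgb : ProxBoundedAt g γ₀) (hgx : g (c x₀) = gx) {δ : ℝ} (hδ : 0 ≤ δ) :
    ∃ (γ : ℕ → ℝ) (p : ℕ → E × F), (∀ k, 0 < γ k) ∧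
      (∀ k, p k ∈ closedBall x₀ δ ×ˢ univ ∧
        IsMinOn (penalty f c g x₀ (γ k)) (closedBall x₀ δ ×ˢ univ) (p k)) ∧
      Tendsto (fun k => (p k).2 - c (p k).1) atTop (𝓝 0) ∧
      ∀ k, g (p k).2 ≤ ((f x₀ + gx - f (p k).1 - ‖(p k).1 - x₀‖ ^ 2 : ℝ) : EReal) := by
  obtain ⟨γ, -, hγ, hγlim⟩ := exists_seq_strictAnti_tendsto' (div_pos hγ₀ four_pos)
  have hγpos k : 0 < γ k := (hγ k).1
  have hγle k : 4 * γ k ≤ γ₀ := by linarith [(hγ k).2]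
  choose p hpS hpmin using fun k => exists_isMinOn_penalty hf hc hg hgb (hγpos k) (hγle k)
    (hgx ▸ EReal.coe_ne_top gx) hδ
  have hval k : penalty f c g x₀ (γ k) (p k) ≤ ((f x₀ + gx : ℝ) : EReal) := by
    simpa [penalty_self, hgx] using
      isMinOn_iff.1 (hpmin k) (x₀, c x₀) ⟨mem_closedBall_self hδ, trivial⟩
  obtain ⟨C, hC⟩ := exists_norm_sub_le_of_penalty_le hf hc hgb (f x₀ + gx) δ
  refine ⟨γ, p, hγpos, fun k => ⟨hpS k, hpmin k⟩, ?_,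
    fun k => le_of_penalty_le (hγpos k).le (hval k)⟩
  exact squeeze_zero_norm (fun k => hC _ (hγpos k) (hγle k) _ (hpS k) (hval k))
    (by simpa using (hγlim.mul_const C).sqrt)

theorem tendsto_of_le_sub_sq_norm [ProperSpace E] (hf : Continuous f) (hc : Continuous c)
    (hg : LowerSemicontinuous g) (hgx : g (c x₀) = gx) {δ : ℝ}
    (hmin : ∀ x, g (c x) ≠ ⊤ → ‖x - x₀‖ ≤ δ →
      (f x₀ : EReal) + g (c x₀) ≤ (f x : EReal) + g (c x))
    (hx : ∀ k, x k ∈ closedBall x₀ δ) (hzx : Tendsto (fun k => z k - c (x k)) atTop (𝓝 0))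
    (hgz : ∀ k, g (z k) ≤ ((f x₀ + gx - f (x k) - ‖x k - x₀‖ ^ 2 : ℝ) : EReal)) :
    Tendsto x atTop (𝓝 x₀) := by
  refine tendsto_of_subseq_tendsto fun ns hns => ?_
  obtain ⟨y, hy, φ, hφ, hlim⟩ := (isCompact_closedBall x₀ δ).tendsto_subseq fun j => hx (ns j)
  refine ⟨φ, ?_⟩
  suffices y = x₀ from this ▸ hlim
  have hzlim : Tendsto (fun j => z (ns (φ j))) atTop (𝓝 (c y)) := by
    simpa using (hzx.comp (hns.comp hφ.tendsto_atTop)).add ((hc.tendsto y).comp hlim)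
  have hB : Tendsto
      (fun j => ((f x₀ + gx - f (x (ns (φ j))) - ‖x (ns (φ j)) - x₀‖ ^ 2 : ℝ) : EReal))
      atTop (𝓝 ((f x₀ + gx - f y - ‖y - x₀‖ ^ 2 : ℝ) : EReal)) :=
    EReal.tendsto_coe.2 (((by fun_prop : Continuous fun x => f x₀ + gx - f x - ‖x - x₀‖ ^ 2)
      |>.tendsto y).comp hlim)
  have hgy := (hg.lowerSemicontinuousAt (c y)).le_of_tendsto_of_le hzlim hB
    (Eventually.of_forall fun j => hgz _)
  have hval := (hmin y (ne_top_of_le_ne_top (EReal.coe_ne_top _) hgy)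
    (mem_closedBall_iff_norm.1 hy)).trans (add_le_add_right hgy _)
  rw [hgx, ← EReal.coe_add, ← EReal.coe_add, EReal.coe_le_coe_iff] at hval
  have : ‖y - x₀‖ ^ 2 ≤ 0 := by linarith
  simpa [sub_eq_zero] using this

theorem tendsto_apply_of_le_sub_sq_norm (hf : Continuous f) (hg : LowerSemicontinuous g)
    (hgx : g (c x₀) = gx) (hx : Tendsto x atTop (𝓝 x₀)) (hz : Tendsto z atTop (𝓝 (c x₀)))
    (hgz : ∀ k, g (z k) ≤ ((f x₀ + gx - f (x k) - ‖x k - x₀‖ ^ 2 : ℝ) : EReal)) :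
    Tendsto (fun k => g (z k)) atTop (𝓝 (g (c x₀))) := by
  refine (hg.lowerSemicontinuousAt (c x₀)).tendsto_of_le_of_tendsto hz ?_
    (Eventually.of_forall hgz)
  have := ((by fun_prop : Continuous fun x => f x₀ + gx - f x - ‖x - x₀‖ ^ 2).tendsto x₀).comp hx
  rw [hgx]
  exact EReal.tendsto_coe.2 (by simpa [Function.comp_def] using this)

end Penalty

section FirstOrder

variable {E F : Type*} [NormedAddCommGroup E] [InnerProductSpace ℝ E] [CompleteSpace E]
  [NormedAddCommGroup F] [InnerProductSpace ℝ F] [CompleteSpace F]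

open InnerProductSpace in
theorem IsLocalMin.gradient_add_adjoint_eq {f : E → ℝ} {c : E → F} {z : F} {a x : E} {γ : ℝ}
    (hf : DifferentiableAt ℝ f x) (hc : DifferentiableAt ℝ c x)
    (hmin : IsLocalMin (fun x => f x + ‖z - c x‖ ^ 2 / (2 * γ) + ‖x - a‖ ^ 2) x) :
    gradient f x + (fderiv ℝ c x).adjoint (γ⁻¹ • (c x - z)) = -((2 : ℝ) • (x - a)) := by
  set G := gradient f x + (fderiv ℝ c x).adjoint (γ⁻¹ • (c x - z)) + (2 : ℝ) • (x - a)
  have hψ : HasFDerivAt (fun x => f x + ‖z - c x‖ ^ 2 / (2 * γ) + ‖x - a‖ ^ 2)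
      (toDual ℝ E G) x := by
    simp only [div_eq_mul_inv]
    refine ((hf.hasGradientAt.hasFDerivAt.add
      ((hc.hasFDerivAt.const_sub z).norm_sq.mul_const (2 * γ)⁻¹)).add
      ((hasFDerivAt_id x).sub_const a).norm_sq).congr_fderiv ?_
    ext h
    simp [G, ContinuousLinearMap.adjoint_inner_left]
    ring
  have hG : G = 0 := (toDual ℝ E).map_eq_zero_iff.mp (hmin.hasFDerivAt_eq_zero hψ)
  exact eq_neg_of_add_eq_zero_left hG

end FirstOrder

theorem local_minimizer_is_AKKT_stationary_general {n m : ℕ}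
    (f : EuclideanSpace ℝ (Fin n) → ℝ)
    (c : EuclideanSpace ℝ (Fin n) → EuclideanSpace ℝ (Fin m))
    (g : EuclideanSpace ℝ (Fin m) → EReal)
    (hf : ContDiff ℝ 1 f) (hc : ContDiff ℝ 1 c)
    (hgbot : ∀ z, g z ≠ ⊥)
    (hglsc : LowerSemicontinuous g) (hgpb : ProxBounded g)
    (xstar : EuclideanSpace ℝ (Fin n))
    (hfeas : g (c xstar) ≠ ⊤)
    (hmin : ∃ δ > (0 : ℝ), ∀ x, g (c x) ≠ ⊤ → ‖x - xstar‖ ≤ δ →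
      (f xstar : EReal) + g (c xstar) ≤ (f x : EReal) + g (c x)) :
    ∃ (xs : ℕ → EuclideanSpace ℝ (Fin n)) (ys zs : ℕ → EuclideanSpace ℝ (Fin m)),
      Tendsto zs atTop (𝓝 (c xstar)) ∧
      Tendsto (fun k => g (zs k)) atTop (𝓝 (g (c xstar))) ∧
      Tendsto (fun k => gradient f (xs k) +
        ContinuousLinearMap.adjoint (fderiv ℝ c (xs k)) (ys k)) atTop (𝓝 0) ∧
      (∀ k, ys k ∈ limSubdiff g (zs k)) ∧
      Tendsto (fun k => c (xs k) - zs k) atTop (𝓝 0) := by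
  obtain ⟨δ, hδ, hloc⟩ := hmin
  obtain ⟨γ₀, hγ₀, hgb⟩ := hgpb
  obtain ⟨gx, hgx⟩ : ∃ gx : ℝ, g (c xstar) = gx := ⟨_, (EReal.coe_toReal hfeas (hgbot _)).symm⟩
  obtain ⟨γ, p, hγ, hp, hzx, hgz⟩ :=
    exists_seq_isMinOn_penalty hf.continuous hc.continuous hglsc hγ₀ hgb hgx hδ.le
  have hx := tendsto_of_le_sub_sq_norm hf.continuous hc.continuous hglsc hgx hloc
    (fun k => (hp k).1.1) hzx hgz
  have hz : Tendsto (fun k => (p k).2) atTop (𝓝 (c xstar)) := by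
    simpa using hzx.add ((hc.continuous.tendsto xstar).comp hx)
  have hgfin k : g (p k).2 ≠ ⊤ := ne_top_of_le_ne_top (EReal.coe_ne_top _) (hgz k)
  refine ⟨fun k => (p k).1, fun k => (γ k)⁻¹ • (c (p k).1 - (p k).2), fun k => (p k).2, hz,
    tendsto_apply_of_le_sub_sq_norm hf.continuous hglsc hgx hx hz hgz, ?_,
    fun k => regSubdiff_subset_limSubdiff _ _ (mem_regSubdiff_of_mem_proxSet (hγ k).ne'
      (mem_proxSet_of_isMinOn_penalty (hp k).2 (hp k).1.1) (hgfin k) (hgbot _)),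
    by simpa using hzx.neg⟩
  have hproxTerm : Tendsto (fun k => -((2 : ℝ) • ((p k).1 - xstar))) atTop (𝓝 0) := by
    simpa using ((hx.sub_const xstar).const_smul (2 : ℝ)).neg
  refine hproxTerm.congr' ?_
  filter_upwards [hx (isOpen_ball.mem_nhds (mem_ball_self hδ))] with k hk
  exact ((isLocalMin_of_isMinOn_penalty (hp k).2 hk (hgfin k) (hgbot _)).gradient_add_adjoint_eq
    (hf.differentiable one_ne_zero _) (hc.differentiable one_ne_zero _)).symm

/-- Every local minimizer of (P): minimize f(x) + g(c(x)) is AKKT-stationary. -/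
theorem local_minimizer_is_AKKT_stationary {n m : ℕ}
    (f : EuclideanSpace ℝ (Fin n) → ℝ)
    (c : EuclideanSpace ℝ (Fin n) → EuclideanSpace ℝ (Fin m))
    (g : EuclideanSpace ℝ (Fin m) → EReal)
    (hf : ContDiff ℝ 1 f) (hc : ContDiff ℝ 1 c)
    (hgproper : ∃ z, g z ≠ ⊤) (hgbot : ∀ z, g z ≠ ⊥)
    (hglsc : LowerSemicontinuous g) (hgpb : ProxBounded g)
    (hbdd : ∃ b : ℝ, ∀ x, (b : EReal) ≤ (f x : EReal) + g (c x))
    (xstar : EuclideanSpace ℝ (Fin n))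
    (hfeas : g (c xstar) ≠ ⊤)
    (hmin : ∃ δ > (0 : ℝ), ∀ x, g (c x) ≠ ⊤ → ‖x - xstar‖ ≤ δ →
      (f xstar : EReal) + g (c xstar) ≤ (f x : EReal) + g (c x)) :
    ∃ (xs : ℕ → EuclideanSpace ℝ (Fin n)) (ys zs : ℕ → EuclideanSpace ℝ (Fin m)),
      Tendsto zs atTop (𝓝 (c xstar)) ∧
      Tendsto (fun k => g (zs k)) atTop (𝓝 (g (c xstar))) ∧
      Tendsto (fun k => gradient f (xs k) +
        ContinuousLinearMap.adjoint (fderiv ℝ c (xs k)) (ys k)) atTop (𝓝 0) ∧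
      (∀ k, ys k ∈ limSubdiff g (zs k)) ∧
      Tendsto (fun k => c (xs k) - zs k) atTop (𝓝 0) :=
  local_minimizer_is_AKKT_stationary_general f c g hf hc hgbot hglsc hgpb xstar hfeas hmin

end
end

section
/- Consider sequences generated by the safeguarded implicit AL method for problem (P). If there exists B ∈ ℝ such that L_{μ_k}(xᵏ, ŷᵏ) = f(xᵏ) + g(zᵏ) + ‖c(xᵏ) + μ_k ŷᵏ − zᵏ‖²/(2μ_k) − (μ_k/2)‖ŷᵏ‖² ≤ B for all k ∈ ℕ, then every accumulation point x* of {xᵏ} is feasible for (P), i.e., c(x*) ∈ dom g. -/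
/-! If `g (c x⋆) = ∞`, lower semicontinuity of `g` contradicts the AL bound as soon as
`zᵏ → c x⋆` along a subsequence with `xᵏ → x⋆`: there the AL bound keeps `g (zᵏ)` bounded above,
since the penalty term is nonnegative, `μ_k` is nonincreasing and `ŷᵏ` stays in the bounded set
`Y`. For `zᵏ → c x⋆` there are two cases. If `μ_k` is reduced infinitely often, then `μ_k → 0`,
and the AL bound combined with the quadratic lower bound that prox-boundedness puts on `g` gives
`‖c xᵏ + μ_k ŷᵏ - zᵏ‖² = O(μ_k)`. Otherwise the update rule eventually forces
`Vᵏ ≤ θ Vᵏ⁻¹`, so `Vᵏ = ‖c xᵏ - zᵏ‖ → 0`. -/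

open Filter Topology Bornology

noncomputable section

variable {H : Type*} [NormedAddCommGroup H] [InnerProductSpace ℝ H]

section PenaltyParameter

theorem tendsto_zero_of_eventually_le_mul {u : ℕ → ℝ} {θ : ℝ} (hθ0 : 0 ≤ θ) (hθ1 : θ < 1)
    (hu : ∀ k, 0 ≤ u k) (h : ∀ᶠ k in atTop, u (k + 1) ≤ θ * u k) :
    Tendsto u atTop (𝓝 0) := by
  obtain ⟨N, hN⟩ := eventually_atTop.1 h
  rw [← tendsto_add_atTop_iff_nat N]
  have hgeom (j : ℕ) : u (j + N) ≤ θ ^ j * u (0 + N) :=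
    le_geom (u := fun j => u (j + N)) hθ0 j fun k _ => by
      simpa only [Nat.add_right_comm k 1 N] using hN (k + N) (Nat.le_add_left N k)
  exact squeeze_zero (fun j => hu _) hgeom
    (by simpa using (tendsto_pow_atTop_nhds_zero_of_lt_one hθ0 hθ1).mul_const (u (0 + N)))

theorem tendsto_zero_of_frequently_eq_mul {μ : ℕ → ℝ} {κ : ℝ} (hanti : Antitone μ)
    (hnonneg : ∀ k, 0 ≤ μ k) (hκ : κ ≠ 1) (h : ∃ᶠ k in atTop, μ (k + 1) = κ * μ k) :
    Tendsto μ atTop (𝓝 0) := by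
  have hlim := tendsto_atTop_ciInf hanti ⟨0, by rintro _ ⟨k, rfl⟩; exact hnonneg k⟩
  have hfix : ⨅ k, μ k = κ * ⨅ k, μ k :=
    tendsto_nhds_unique_of_frequently_eq ((tendsto_add_atTop_iff_nat 1).2 hlim)
      (hlim.const_mul κ) h
  have hzero : ⨅ k, μ k = 0 := by
    have : (1 - κ) * ⨅ k, μ k = 0 := by linear_combination hfix
    exact (mul_eq_zero.1 this).resolve_left (sub_ne_zero.2 hκ.symm)
  rwa [hzero] at hlim

def IsPenaltyUpdate (θ κ : ℝ) (V μ : ℕ → ℝ) : Prop :=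
  μ 1 = μ 0 ∧ ∀ k, 1 ≤ k → μ (k + 1) = if V k ≤ θ * V (k - 1) then μ k else κ * μ k

namespace IsPenaltyUpdate

variable {θ κ : ℝ} {V μ : ℕ → ℝ}

theorem step (h : IsPenaltyUpdate θ κ V μ) (k : ℕ) : μ (k + 1) = μ k ∨ μ (k + 1) = κ * μ k := by
  rcases k with _ | k
  · exact Or.inl h.1
  · rw [h.2 (k + 1) k.succ_pos]
    split_ifs
    · exact Or.inl rfl
    · exact Or.inr rfl

theorem pos (h : IsPenaltyUpdate θ κ V μ) (hκ : 0 < κ) (hμ0 : 0 < μ 0) (k : ℕ) : 0 < μ k := by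
  induction k with
  | zero => exact hμ0
  | succ k ih =>
    rcases h.step k with hk | hk <;> rw [hk]
    exacts [ih, mul_pos hκ ih]

theorem antitone (h : IsPenaltyUpdate θ κ V μ) (hκ0 : 0 < κ) (hκ1 : κ ≤ 1) (hμ0 : 0 < μ 0) :
    Antitone μ :=
  antitone_nat_of_succ_le fun k => by
    rcases h.step k with hk | hk <;> rw [hk]
    exact mul_le_of_le_one_left (h.pos hκ0 hμ0 k).le hκ1

theorem eventually_le_mul (h : IsPenaltyUpdate θ κ V μ)
    (hfreq : ¬∃ᶠ k in atTop, μ (k + 1) = κ * μ k) : ∀ᶠ k in atTop, V (k + 1) ≤ θ * V k := by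
  filter_upwards [(tendsto_add_atTop_nat 1).eventually (not_frequently.1 hfreq)] with k hk
  have hupd := h.2 (k + 1) le_add_self
  rw [Nat.add_sub_cancel] at hupd
  by_contra hV
  exact hk (by rwa [if_neg hV] at hupd)

theorem tendsto_zero_or_tendsto_zero (h : IsPenaltyUpdate θ κ V μ) (hθ : θ ∈ Set.Ioo 0 1)
    (hκ : κ ∈ Set.Ioo 0 1) (hμ0 : 0 < μ 0) (hV : ∀ k, 0 ≤ V k) :
    Tendsto μ atTop (𝓝 0) ∨ Tendsto V atTop (𝓝 0) := by
  by_cases hfreq : ∃ᶠ k in atTop, μ (k + 1) = κ * μ k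
  · exact Or.inl <| tendsto_zero_of_frequently_eq_mul (h.antitone hκ.1 hκ.2.le hμ0)
      (fun k => (h.pos hκ.1 hμ0 k).le) hκ.2.ne hfreq
  · exact Or.inr <| tendsto_zero_of_eventually_le_mul hθ.1.le hθ.2 hV (h.eventually_le_mul hfreq)

end IsPenaltyUpdate

end PenaltyParameter

section QuadraticPenalty

variable {E : Type*} [SeminormedAddCommGroup E]

theorem norm_sub_sq_le_of_penalty_le {u z : E} {μ γ b G C : ℝ} (hμ : 0 < μ) (hμγ : 4 * μ ≤ γ)
    (hlow : b ≤ G + ‖z‖ ^ 2 / (2 * γ)) (hup : ‖u - z‖ ^ 2 / (2 * μ) + G ≤ C) :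
    ‖u - z‖ ^ 2 ≤ 4 * μ * (C - b + ‖u‖ ^ 2 / γ) := by
  have hγ : 0 < γ := by linarith
  have hz : ‖z‖ ≤ ‖u‖ + ‖u - z‖ := by simpa using norm_sub_le u (u - z)
  have hz2 : ‖z‖ ^ 2 ≤ 2 * (‖u‖ ^ 2 + ‖u - z‖ ^ 2) := by
    nlinarith [norm_nonneg z, sq_nonneg (‖u‖ - ‖u - z‖)]
  have hzγ : ‖z‖ ^ 2 / (2 * γ) ≤ ‖u‖ ^ 2 / γ + ‖u - z‖ ^ 2 / γ := by
    rw [← add_div, div_le_div_iff₀ (by positivity) hγ]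
    nlinarith [mul_le_mul_of_nonneg_left hz2 hγ.le]
  have hγμ : ‖u - z‖ ^ 2 / γ ≤ ‖u - z‖ ^ 2 / (4 * μ) :=
    div_le_div_of_nonneg_left (sq_nonneg _) (by positivity) hμγ
  have hhalf : ‖u - z‖ ^ 2 / (2 * μ) = 2 * (‖u - z‖ ^ 2 / (4 * μ)) := by
    field_simp
    ring
  have key : ‖u - z‖ ^ 2 / (4 * μ) ≤ C - b + ‖u‖ ^ 2 / γ := by linarith
  rw [div_le_iff₀ (by positivity), mul_comm] at key
  exact key

theorem tendsto_of_penalty_le {u z : ℕ → E} {μ G : ℕ → ℝ} {p : E} {γ b C : ℝ} (hγ : 0 < γ)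
    (hμ : ∀ k, 0 < μ k) (hμ0 : Tendsto μ atTop (𝓝 0)) (hu : Tendsto u atTop (𝓝 p))
    (hlow : ∀ k, b ≤ G k + ‖z k‖ ^ 2 / (2 * γ))
    (hup : ∀ᶠ k in atTop, ‖u k - z k‖ ^ 2 / (2 * μ k) + G k ≤ C) :
    Tendsto z atTop (𝓝 p) := by
  have hsmall : ∀ᶠ k in atTop, 4 * μ k ≤ γ := by
    filter_upwards [hμ0.eventually (eventually_le_nhds (by positivity : (0 : ℝ) < γ / 4))]
      with k hk
    linarith
  have hbound : Tendsto (fun k => 4 * μ k * (C - b + ‖u k‖ ^ 2 / γ)) atTop (𝓝 0) := by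
    simpa using (hμ0.const_mul 4).mul (((hu.norm.pow 2).div_const γ).const_add (C - b))
  have hsq : Tendsto (fun k => ‖u k - z k‖ ^ 2) atTop (𝓝 0) := by
    refine squeeze_zero' (Eventually.of_forall fun k => sq_nonneg _) ?_ hbound
    filter_upwards [hsmall, hup] with k hkγ hk
    exact norm_sub_sq_le_of_penalty_le (hμ k) hkγ (hlow k) hk
  have hdiff : Tendsto (fun k => u k - z k) atTop (𝓝 0) := by
    rw [tendsto_zero_iff_norm_tendsto_zero]
    simpa using hsq.sqrt
  simpa using hu.sub hdiff

theorem IsPenaltyUpdate.tendsto_comp_of_penalty_le [NormedSpace ℝ E] {cx z yh : ℕ → E}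
    {μ G : ℕ → ℝ} {φ : ℕ → ℕ} {p : E} {θ κ γ b C M : ℝ}
    (hupd : IsPenaltyUpdate θ κ (fun k => ‖cx k - z k‖) μ) (hθ : θ ∈ Set.Ioo 0 1)
    (hκ : κ ∈ Set.Ioo 0 1) (hμ0 : 0 < μ 0) (hγ : 0 < γ) (hφ : StrictMono φ)
    (hcx : Tendsto (fun k => cx (φ k)) atTop (𝓝 p)) (hM : ∀ k, ‖yh k‖ ≤ M)
    (hlow : ∀ k, b ≤ G k + ‖z k‖ ^ 2 / (2 * γ))
    (hup : ∀ᶠ k in atTop,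
      ‖cx (φ k) + μ (φ k) • yh (φ k) - z (φ k)‖ ^ 2 / (2 * μ (φ k)) + G (φ k) ≤ C) :
    Tendsto (fun k => z (φ k)) atTop (𝓝 p) := by
  rcases hupd.tendsto_zero_or_tendsto_zero hθ hκ hμ0 (fun k => norm_nonneg _) with hμ | hV
  · have hμφ := hμ.comp hφ.tendsto_atTop
    refine tendsto_of_penalty_le hγ (fun k => hupd.pos hκ.1 hμ0 _) hμφ ?_ (fun k => hlow (φ k)) hup
    simpa using hcx.add (hμφ.zero_smul_isBoundedUnder_le
      (isBoundedUnder_of_eventually_le (Eventually.of_forall fun k => hM (φ k))))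
  · simpa using hcx.sub (tendsto_zero_iff_norm_tendsto_zero.2 (hV.comp hφ.tendsto_atTop))

end QuadraticPenalty

theorem AL_bounded_implies_feasible_general {n m : ℕ}
    (f : EuclideanSpace ℝ (Fin n) → ℝ)
    (c : EuclideanSpace ℝ (Fin n) → EuclideanSpace ℝ (Fin m))
    (g : EuclideanSpace ℝ (Fin m) → EReal)
    (hf : ContDiff ℝ 1 f) (hc : ContDiff ℝ 1 c)
    (hgbot : ∀ z, g z ≠ ⊥)
    (hglsc : LowerSemicontinuous g) (hgpb : ProxBounded g)
    -- parameters of the safeguarded implicit AL method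
    (θ κ : ℝ) (hθ : θ ∈ Set.Ioo (0 : ℝ) 1) (hκ : κ ∈ Set.Ioo (0 : ℝ) 1)
    (Y : Set (EuclideanSpace ℝ (Fin m))) (hYbdd : IsBounded Y)
    -- iterates of the method
    (x : ℕ → EuclideanSpace ℝ (Fin n))
    (z yh : ℕ → EuclideanSpace ℝ (Fin m))
    (μ : ℕ → ℝ)
    (hμ0 : 0 < μ 0)
    (hyh : ∀ k, yh k ∈ Y)
    (hμ1 : μ 1 = μ 0)
    (hμupd : ∀ k, 1 ≤ k →
      μ (k + 1) =
        if ‖c (x k) - z k‖ ≤ θ * ‖c (x (k - 1)) - z (k - 1)‖ then μ k else κ * μ k)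
    -- upper bound on the augmented Lagrangian values
    (hB : ∃ B : ℝ, ∀ k,
      ((f (x k) + ‖c (x k) + μ k • yh k - z k‖ ^ 2 / (2 * μ k)
          - μ k / 2 * ‖yh k‖ ^ 2 : ℝ) : EReal) + g (z k) ≤ (B : EReal))
    (xstar : EuclideanSpace ℝ (Fin n))
    (hacc : ∃ φ : ℕ → ℕ, StrictMono φ ∧ Tendsto (fun k => x (φ k)) atTop (𝓝 xstar)) :
    g (c xstar) ≠ ⊤ := by
  obtain ⟨φ, hφ, hxφ⟩ := hacc
  obtain ⟨B, hB⟩ := hB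
  obtain ⟨M, hM⟩ := isBounded_iff_forall_norm_le.1 hYbdd
  obtain ⟨γ, hγ, b, hb⟩ := hgpb
  have hupd : IsPenaltyUpdate θ κ (fun k => ‖c (x k) - z k‖) μ := ⟨hμ1, hμupd⟩
  set G : ℕ → ℝ := fun k => (g (z k)).toReal
  have hG (k : ℕ) : g (z k) = G k := by
    refine (EReal.coe_toReal ?_ (hgbot _)).symm
    exact (EReal.add_ne_top_iff_ne_top_right (EReal.coe_ne_bot _) (EReal.coe_ne_top _)).1
      (ne_top_of_le_ne_top (EReal.coe_ne_top B) (hB k))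
  obtain ⟨C, hup⟩ : ∃ C : ℝ, ∀ᶠ k in atTop,
      ‖c (x (φ k)) + μ (φ k) • yh (φ k) - z (φ k)‖ ^ 2 / (2 * μ (φ k)) + G (φ k) ≤ C := by
    refine ⟨B - (f xstar - 1) + μ 0 / 2 * M ^ 2, ?_⟩
    filter_upwards [((hf.continuous.tendsto xstar).comp hxφ).eventually
      (eventually_gt_nhds (sub_one_lt (f xstar)))] with k hfk
    have hAL : f (x (φ k)) + ‖c (x (φ k)) + μ (φ k) • yh (φ k) - z (φ k)‖ ^ 2 / (2 * μ (φ k))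
        - μ (φ k) / 2 * ‖yh (φ k)‖ ^ 2 + G (φ k) ≤ B := by
      exact_mod_cast hG (φ k) ▸ hB (φ k)
    have hyM : μ (φ k) * ‖yh (φ k)‖ ^ 2 ≤ μ 0 * M ^ 2 :=
      mul_le_mul (hupd.antitone hκ.1 hκ.2.le hμ0 (Nat.zero_le _))
        (pow_le_pow_left₀ (norm_nonneg _) (hM _ (hyh _)) 2) (sq_nonneg _) hμ0.le
    simp only [Function.comp_apply] at hfk
    linarith
  have hz : Tendsto (fun k => z (φ k)) atTop (𝓝 (c xstar)) :=
    hupd.tendsto_comp_of_penalty_le hθ hκ hμ0 hγ hφ ((hc.continuous.tendsto xstar).comp hxφ)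
      (fun k => hM _ (hyh k)) (fun k => by exact_mod_cast hG k ▸ hb (z k)) hup
  have hgC : ∀ᶠ k in atTop, g (z (φ k)) ≤ C := by
    filter_upwards [hup] with k hk
    have := hupd.pos hκ.1 hμ0 (φ k)
    rw [hG]
    exact_mod_cast le_trans (le_add_of_nonneg_left (by positivity)) hk
  exact ne_top_of_le_ne_top (EReal.coe_ne_top C) ((hglsc.isClosed_preimage _).mem_of_tendsto hz hgC)

/-- If the AL values are bounded above along the iterates of the
safeguarded implicit AL method, then every accumulation point is feasible. -/
theorem AL_bounded_implies_feasible {n m : ℕ}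
    (f : EuclideanSpace ℝ (Fin n) → ℝ)
    (c : EuclideanSpace ℝ (Fin n) → EuclideanSpace ℝ (Fin m))
    (g : EuclideanSpace ℝ (Fin m) → EReal)
    (hf : ContDiff ℝ 1 f) (hc : ContDiff ℝ 1 c)
    (hgproper : ∃ z, g z ≠ ⊤) (hgbot : ∀ z, g z ≠ ⊥)
    (hglsc : LowerSemicontinuous g) (hgpb : ProxBounded g)
    (hbdd : ∃ b : ℝ, ∀ x, (b : EReal) ≤ (f x : EReal) + g (c x))
    -- parameters of the safeguarded implicit AL method
    (θ κ : ℝ) (hθ : θ ∈ Set.Ioo (0 : ℝ) 1) (hκ : κ ∈ Set.Ioo (0 : ℝ) 1)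
    (Y : Set (EuclideanSpace ℝ (Fin m))) (hYne : Y.Nonempty) (hYbdd : IsBounded Y)
    -- iterates of the method
    (x : ℕ → EuclideanSpace ℝ (Fin n))
    (z yh y : ℕ → EuclideanSpace ℝ (Fin m))
    (μ etol : ℕ → ℝ)
    (hμ0 : 0 < μ 0)
    (hyh : ∀ k, yh k ∈ Y)
    (hetol : ∀ k, 0 ≤ etol k)
    (hz : ∀ k, z k ∈ proxSet g (μ k) (c (x k) + μ k • yh k))
    (hy : ∀ k, y k = yh k + (μ k)⁻¹ • (c (x k) - z k))
    (hdual : ∀ k, ‖gradient f (x k) +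
        ContinuousLinearMap.adjoint (fderiv ℝ c (x k)) (y k)‖ ≤ etol k)
    (hμ1 : μ 1 = μ 0)
    (hμupd : ∀ k, 1 ≤ k →
      μ (k + 1) =
        if ‖c (x k) - z k‖ ≤ θ * ‖c (x (k - 1)) - z (k - 1)‖ then μ k else κ * μ k)
    -- upper bound on the augmented Lagrangian values
    (hB : ∃ B : ℝ, ∀ k,
      ((f (x k) + ‖c (x k) + μ k • yh k - z k‖ ^ 2 / (2 * μ k)
          - μ k / 2 * ‖yh k‖ ^ 2 : ℝ) : EReal) + g (z k) ≤ (B : EReal))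
    (xstar : EuclideanSpace ℝ (Fin n))
    (hacc : ∃ φ : ℕ → ℕ, StrictMono φ ∧ Tendsto (fun k => x (φ k)) atTop (𝓝 xstar)) :
    g (c xstar) ≠ ⊤ :=
  AL_bounded_implies_feasible_general f c g hf hc hgbot hglsc hgpb θ κ hθ hκ Y hYbdd x z yh μ hμ0
    hyh hμ1 hμupd hB xstar hacc

end
end

section
/- Consider sequences generated by the safeguarded implicit AL method for problem (P). If the penalty parameters {μ_k} are bounded away from zero and dom g is closed, then every accumulation point x* of {xᵏ} is feasible for (P), i.e., c(x*) ∈ dom g. -/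
open Filter Topology Bornology

noncomputable section

variable {H : Type*} [NormedAddCommGroup H] [InnerProductSpace ℝ H]

/-! Each `zᵏ`, being a proximal point, lies in `dom g`. Since `μ` is bounded away from zero it
is reduced only finitely often, so eventually the residual `‖c(xᵏ) − zᵏ‖` contracts by the factor
`θ` at every step and tends to zero. Along the convergent subsequence `zᵏ → c(x*)`, which lies in
`dom g` because `dom g` is closed. -/

/- The penalty parameters converge to a positive limit, so eventually `μ (k + 1) > κ μ k`,
which rules out a shrinking step. -/
theorem eventually_of_pos_lowerBound_of_ite_mul {μ : ℕ → ℝ} {P : ℕ → Prop} [DecidablePred P]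
    {κ b : ℝ} (hκ : κ < 1) (hb : 0 < b) (hμb : ∀ k, b ≤ μ k)
    (hupd : ∀ k, μ (k + 1) = if P k then μ k else κ * μ k) :
    ∀ᶠ k in atTop, P k := by
  have hanti : Antitone μ := antitone_nat_of_succ_le fun k => by
    rw [hupd k]
    split_ifs
    · exact le_rfl
    · nlinarith [hμb k]
  have hlim : Tendsto μ atTop (𝓝 (⨅ k, μ k)) :=
    tendsto_atTop_ciInf hanti ⟨b, by rintro _ ⟨k, rfl⟩; exact hμb k⟩
  have hgap : Tendsto (fun k => μ (k + 1) - κ * μ k) atTop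
      (𝓝 ((1 - κ) * ⨅ k, μ k)) := by
    rw [show (1 - κ) * ⨅ k, μ k = (⨅ k, μ k) - κ * ⨅ k, μ k by ring]
    exact (hlim.comp (tendsto_add_atTop_nat 1)).sub (hlim.const_mul κ)
  have hgap_pos : 0 < (1 - κ) * ⨅ k, μ k :=
    mul_pos (sub_pos.2 hκ) (hb.trans_le (le_ciInf hμb))
  filter_upwards [hgap.eventually (lt_mem_nhds hgap_pos)] with k hk
  by_contra hPk
  rw [hupd k, if_neg hPk, sub_self] at hk
  exact lt_irrefl 0 hk

theorem proxSet_subset_dom {E : Type*} [NormedAddCommGroup E] {g : E → EReal}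
    (hg : ∃ w, g w ≠ ⊤) (γ : ℝ) (u : E) :
    proxSet g γ u ⊆ {w | g w ≠ ⊤} := by
  intro z hz hztop
  obtain ⟨w, hw⟩ := hg
  have hzw := hz w
  rw [hztop, EReal.top_add_of_ne_bot (EReal.coe_ne_bot _)] at hzw
  exact (EReal.add_lt_top hw (EReal.coe_ne_top _)).ne (top_le_iff.mp hzw)

theorem mu_bounded_away_domg_closed_implies_feasible_general {n m : ℕ}
    (c : EuclideanSpace ℝ (Fin n) → EuclideanSpace ℝ (Fin m))
    (g : EuclideanSpace ℝ (Fin m) → EReal)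
    (hc : ContDiff ℝ 1 c)
    (hgproper : ∃ z, g z ≠ ⊤)
    -- parameters of the safeguarded implicit AL method
    (θ κ : ℝ) (hθ : θ ∈ Set.Ioo (0 : ℝ) 1) (hκ : κ ∈ Set.Ioo (0 : ℝ) 1)
    -- iterates of the method
    (x : ℕ → EuclideanSpace ℝ (Fin n))
    (z yh : ℕ → EuclideanSpace ℝ (Fin m))
    (μ : ℕ → ℝ)
    (hz : ∀ k, z k ∈ proxSet g (μ k) (c (x k) + μ k • yh k))
    (hμupd : ∀ k, 1 ≤ k →
      μ (k + 1) =
        if ‖c (x k) - z k‖ ≤ θ * ‖c (x (k - 1)) - z (k - 1)‖ then μ k else κ * μ k)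
    -- penalty parameters bounded away from zero
    (hμlo : ∃ mlo > (0 : ℝ), ∀ k, mlo ≤ μ k)
    -- dom g closed
    (hdomcl : IsClosed {w : EuclideanSpace ℝ (Fin m) | g w ≠ ⊤})
    (xstar : EuclideanSpace ℝ (Fin n))
    (hacc : ∃ φ : ℕ → ℕ, StrictMono φ ∧ Tendsto (fun k => x (φ k)) atTop (𝓝 xstar)) :
    g (c xstar) ≠ ⊤ := by
  obtain ⟨b, hb, hμb⟩ := hμlo
  obtain ⟨φ, hφ, hxφ⟩ := hacc
  have hratio : ∀ᶠ k in atTop,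
      ‖c (x (k + 1)) - z (k + 1)‖ ≤ θ * ‖c (x k) - z k‖ :=
    eventually_of_pos_lowerBound_of_ite_mul hκ.2 hb (fun k => hμb (k + 1))
      fun k => by simpa using hμupd (k + 1) (Nat.le_add_left 1 k)
  have hres : Tendsto (fun k => c (x k) - z k) atTop (𝓝 0) :=
    (summable_of_ratio_norm_eventually_le hθ.2 hratio).tendsto_atTop_zero
  have hzφ : Tendsto (fun k => z (φ k)) atTop (𝓝 (c xstar)) := by
    simpa using ((hc.continuous.tendsto xstar).comp hxφ).sub (hres.comp hφ.tendsto_atTop)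
  exact hdomcl.mem_of_tendsto hzφ
    (Eventually.of_forall fun k => proxSet_subset_dom hgproper _ _ (hz (φ k)))

/-- If the penalty parameters stay bounded away from zero and dom g is
closed, every accumulation point of the safeguarded implicit AL method is feasible. -/
theorem mu_bounded_away_domg_closed_implies_feasible {n m : ℕ}
    (f : EuclideanSpace ℝ (Fin n) → ℝ)
    (c : EuclideanSpace ℝ (Fin n) → EuclideanSpace ℝ (Fin m))
    (g : EuclideanSpace ℝ (Fin m) → EReal)
    (hf : ContDiff ℝ 1 f) (hc : ContDiff ℝ 1 c)
    (hgproper : ∃ z, g z ≠ ⊤) (hgbot : ∀ z, g z ≠ ⊥)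
    (hglsc : LowerSemicontinuous g) (hgpb : ProxBounded g)
    (hbdd : ∃ b : ℝ, ∀ x, (b : EReal) ≤ (f x : EReal) + g (c x))
    -- parameters of the safeguarded implicit AL method
    (θ κ : ℝ) (hθ : θ ∈ Set.Ioo (0 : ℝ) 1) (hκ : κ ∈ Set.Ioo (0 : ℝ) 1)
    (Y : Set (EuclideanSpace ℝ (Fin m))) (hYne : Y.Nonempty) (hYbdd : IsBounded Y)
    -- iterates of the method
    (x : ℕ → EuclideanSpace ℝ (Fin n))
    (z yh y : ℕ → EuclideanSpace ℝ (Fin m))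
    (μ etol : ℕ → ℝ)
    (hμ0 : 0 < μ 0)
    (hyh : ∀ k, yh k ∈ Y)
    (hetol : ∀ k, 0 ≤ etol k)
    (hz : ∀ k, z k ∈ proxSet g (μ k) (c (x k) + μ k • yh k))
    (hy : ∀ k, y k = yh k + (μ k)⁻¹ • (c (x k) - z k))
    (hdual : ∀ k, ‖gradient f (x k) +
        ContinuousLinearMap.adjoint (fderiv ℝ c (x k)) (y k)‖ ≤ etol k)
    (hμ1 : μ 1 = μ 0)
    (hμupd : ∀ k, 1 ≤ k →
      μ (k + 1) =
        if ‖c (x k) - z k‖ ≤ θ * ‖c (x (k - 1)) - z (k - 1)‖ then μ k else κ * μ k)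
    -- penalty parameters bounded away from zero
    (hμlo : ∃ mlo > (0 : ℝ), ∀ k, mlo ≤ μ k)
    -- dom g closed
    (hdomcl : IsClosed {w : EuclideanSpace ℝ (Fin m) | g w ≠ ⊤})
    (xstar : EuclideanSpace ℝ (Fin n))
    (hacc : ∃ φ : ℕ → ℕ, StrictMono φ ∧ Tendsto (fun k => x (φ k)) atTop (𝓝 xstar)) :
    g (c xstar) ≠ ⊤ :=
  mu_bounded_away_domg_closed_implies_feasible_general c g hc hgproper θ κ hθ hκ x z yh μ hz hμupd
    hμlo hdomcl xstar hacc

end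
end

section
/- Consider sequences generated by the safeguarded implicit AL method for problem (P). If the penalty parameters {μ_k} are bounded away from zero and the descent condition L_{μ_k}(xᵏ, ŷᵏ) ≤ L_{μ_k}(xᵏ⁻¹, ŷᵏ) holds for all k ∈ ℕ, where L_μ(x, y) := f(x) + inf_z { g(z) + ⟨y, c(x) − z⟩ + ‖c(x) − z‖²/(2μ) }, then every accumulation point x* of {xᵏ} is feasible for (P), i.e., c(x*) ∈ dom g. -/
/-!
Once the penalty parameters stay away from zero, the multiplicative update `μ ← κ μ`
can fire only finitely often (an antitone sequence bounded below by a positive number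
converges to a positive limit, which `κ < 1` rules out for a frequently applied update).
Hence the residuals `Vᵏ = ‖c(xᵏ) − zᵏ‖` eventually contract by the factor `θ` and tend to
zero, so `zᵏ → c(x*)` along the convergent subsequence. Comparing the proximal point `zᵏ`
with any point `w ∈ dom g` bounds `g(zᵏ)` uniformly, since the prox centers
`c(xᵏ) + μₖ ŷᵏ` stay bounded and `μₖ` is bounded below; lower semicontinuity of `g`
transfers the bound to `g(c(x*))`.
-/

open Filter Topology Bornology

noncomputable section

variable {H : Type*} [NormedAddCommGroup H] [InnerProductSpace ℝ H]

/-- The penalty update `μₖ₊₁ = μₖ` if `Vᵏ ≤ θ Vᵏ⁻¹`, else `κ μₖ`, shifted by one index so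
that no truncated `k - 1` appears. -/
def PenaltyUpdate (θ κ : ℝ) (μ V : ℕ → ℝ) : Prop :=
  ∀ k, μ (k + 2) = if V (k + 1) ≤ θ * V k then μ (k + 1) else κ * μ (k + 1)

theorem Antitone.eventually_succ_ne_mul {μ : ℕ → ℝ} {κ lo : ℝ} (hμ : Antitone μ)
    (hκ : κ < 1) (hlo : 0 < lo) (hμlo : ∀ k, lo ≤ μ k) :
    ∀ᶠ k in atTop, μ (k + 1) ≠ κ * μ k := by
  have hbdd : BddBelow (Set.range μ) := ⟨lo, Set.forall_mem_range.2 hμlo⟩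
  have hlim := tendsto_atTop_ciInf hμ hbdd
  have hpos : 0 < (⨅ k, μ k) - κ * ⨅ k, μ k := by
    have := le_ciInf hμlo
    nlinarith
  have hgap := ((hlim.comp (tendsto_add_atTop_nat 1)).sub (hlim.const_mul κ)).eventually
    (eventually_gt_nhds hpos)
  filter_upwards [hgap] with k hk
  exact sub_ne_zero.1 hk.ne'

namespace PenaltyUpdate

variable {θ κ : ℝ} {μ V : ℕ → ℝ}

theorem antitone_succ (h : PenaltyUpdate θ κ μ V) (hκ : κ ≤ 1) (hμ : ∀ k, 0 ≤ μ k) :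
    Antitone fun k => μ (k + 1) := by
  refine antitone_nat_of_succ_le fun k => ?_
  rw [h k]
  split_ifs
  · exact le_rfl
  · exact mul_le_of_le_one_left (hμ _) hκ

theorem le_max (h : PenaltyUpdate θ κ μ V) (hκ : κ ≤ 1) (hμ : ∀ k, 0 ≤ μ k) (k : ℕ) :
    μ k ≤ max (μ 0) (μ 1) := by
  cases k with
  | zero => exact le_max_left _ _
  | succ k => exact le_max_of_le_right (h.antitone_succ hκ hμ k.zero_le)

theorem eventually_le_mul (h : PenaltyUpdate θ κ μ V) (hκ : κ < 1) {lo : ℝ} (hlo : 0 < lo)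
    (hμlo : ∀ k, lo ≤ μ k) : ∀ᶠ k in atTop, V (k + 1) ≤ θ * V k := by
  have hanti := h.antitone_succ hκ.le fun k => hlo.le.trans (hμlo k)
  filter_upwards [hanti.eventually_succ_ne_mul hκ hlo fun k => hμlo (k + 1)] with k hk
  by_contra hV
  exact hk (by rw [h k, if_neg hV])

end PenaltyUpdate

theorem le_add_of_mem_proxSet {E : Type*} [NormedAddCommGroup E] {g : E → EReal}
    {γ lo R : ℝ} {u z : E} (hlo : 0 < lo)
    (hγ : lo ≤ γ) (hu : ‖u‖ ≤ R) (hz : z ∈ proxSet g γ u) (w : E) :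
    g z ≤ g w + (((‖w‖ + R) ^ 2 / (2 * lo) : ℝ) : EReal) := by
  have hγpos : 0 < γ := hlo.trans_le hγ
  have hdist : ‖w - u‖ ^ 2 / (2 * γ) ≤ (‖w‖ + R) ^ 2 / (2 * lo) := by
    have : ‖w - u‖ ≤ ‖w‖ + R := (norm_sub_le w u).trans (by linarith)
    gcongr
  calc g z ≤ g z + ((‖z - u‖ ^ 2 / (2 * γ) : ℝ) : EReal) :=
        le_add_of_nonneg_right (EReal.coe_nonneg.2 (by positivity))
    _ ≤ g w + ((‖w - u‖ ^ 2 / (2 * γ) : ℝ) : EReal) := hz w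
    _ ≤ g w + (((‖w‖ + R) ^ 2 / (2 * lo) : ℝ) : EReal) := by gcongr

theorem ne_top_of_tendsto_of_mem_proxSet {ι E : Type*} [NormedAddCommGroup E] {l : Filter ι}
    [l.NeBot] {g : E → EReal} (hg : LowerSemicontinuous g) (hdom : ∃ w, g w ≠ ⊤)
    {γ : ι → ℝ} {u z : ι → E} {lo R : ℝ} {a : E} (hlo : 0 < lo) (hγ : ∀ i, lo ≤ γ i)
    (hu : ∀ᶠ i in l, ‖u i‖ ≤ R) (hz : ∀ i, z i ∈ proxSet g (γ i) (u i))
    (hza : Tendsto z l (𝓝 a)) : g a ≠ ⊤ := by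
  obtain ⟨w, hw⟩ := hdom
  have hgz := hu.mono fun i hi => le_add_of_mem_proxSet hlo (hγ i) hi (hz i) w
  exact ne_top_of_le_ne_top (EReal.add_lt_top hw (EReal.coe_ne_top _)).ne
    ((hg.isClosed_preimage _).mem_of_tendsto hza hgz)

theorem mu_bounded_away_AL_descent_implies_feasible_general {n m : ℕ}
    (c : EuclideanSpace ℝ (Fin n) → EuclideanSpace ℝ (Fin m))
    (g : EuclideanSpace ℝ (Fin m) → EReal)
    (hc : ContDiff ℝ 1 c)
    (hgproper : ∃ z, g z ≠ ⊤)
    (hglsc : LowerSemicontinuous g)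
    -- parameters of the safeguarded implicit AL method
    (θ κ : ℝ) (hθ : θ ∈ Set.Ioo (0 : ℝ) 1) (hκ : κ ∈ Set.Ioo (0 : ℝ) 1)
    (Y : Set (EuclideanSpace ℝ (Fin m))) (hYbdd : IsBounded Y)
    -- iterates of the method
    (x : ℕ → EuclideanSpace ℝ (Fin n))
    (z yh : ℕ → EuclideanSpace ℝ (Fin m))
    (μ : ℕ → ℝ)
    (hyh : ∀ k, yh k ∈ Y)
    (hz : ∀ k, z k ∈ proxSet g (μ k) (c (x k) + μ k • yh k))
    (hμupd : ∀ k, 1 ≤ k →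
      μ (k + 1) =
        if ‖c (x k) - z k‖ ≤ θ * ‖c (x (k - 1)) - z (k - 1)‖ then μ k else κ * μ k)
    -- penalty parameters bounded away from zero
    (hμlo : ∃ mlo > (0 : ℝ), ∀ k, mlo ≤ μ k)
    (xstar : EuclideanSpace ℝ (Fin n))
    (hacc : ∃ φ : ℕ → ℕ, StrictMono φ ∧ Tendsto (fun k => x (φ k)) atTop (𝓝 xstar)) :
    g (c xstar) ≠ ⊤ := by
  obtain ⟨lo, hlo, hμlo⟩ := hμlo
  obtain ⟨φ, hφ, hxφ⟩ := hacc
  obtain ⟨R, hR⟩ := isBounded_iff_forall_norm_le.1 hYbdd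
  have hμ : ∀ k, 0 ≤ μ k := fun k => hlo.le.trans (hμlo k)
  have hrule : PenaltyUpdate θ κ μ fun k => ‖c (x k) - z k‖ := fun k => by
    simpa using hμupd (k + 1) (by omega)
  have hres : Tendsto (fun k => c (x k) - z k) atTop (𝓝 0) :=
    (summable_of_ratio_norm_eventually_le hθ.2
      (hrule.eventually_le_mul hκ.2 hlo hμlo)).tendsto_atTop_zero
  have hcφ : Tendsto (fun k => c (x (φ k))) atTop (𝓝 (c xstar)) :=
    (hc.continuous.tendsto xstar).comp hxφ
  have hzφ : Tendsto (fun k => z (φ k)) atTop (𝓝 (c xstar)) := by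
    simpa using hcφ.sub (hres.comp hφ.tendsto_atTop)
  obtain ⟨B, hB⟩ := hcφ.norm.isBoundedUnder_le
  have hcenter : ∀ᶠ k in atTop,
      ‖c (x (φ k)) + μ (φ k) • yh (φ k)‖ ≤ B + max (μ 0) (μ 1) * R := by
    filter_upwards [hB] with k hk
    have hyk : ‖μ (φ k) • yh (φ k)‖ ≤ max (μ 0) (μ 1) * R := by
      rw [norm_smul, Real.norm_of_nonneg (hμ _)]
      exact mul_le_mul (hrule.le_max hκ.2.le hμ _) (hR _ (hyh _)) (norm_nonneg _)
        ((hμ 0).trans (le_max_left _ _))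
    exact (norm_add_le _ _).trans (add_le_add hk hyk)
  exact ne_top_of_tendsto_of_mem_proxSet hglsc hgproper hlo (fun k => hμlo _) hcenter
    (fun k => hz _) hzφ

/-- If the penalty parameters stay bounded away from zero and the
implicit AL function decreases along the iterates, every accumulation point is feasible. -/
theorem mu_bounded_away_AL_descent_implies_feasible {n m : ℕ}
    (f : EuclideanSpace ℝ (Fin n) → ℝ)
    (c : EuclideanSpace ℝ (Fin n) → EuclideanSpace ℝ (Fin m))
    (g : EuclideanSpace ℝ (Fin m) → EReal)
    (hf : ContDiff ℝ 1 f) (hc : ContDiff ℝ 1 c)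
    (hgproper : ∃ z, g z ≠ ⊤) (hgbot : ∀ z, g z ≠ ⊥)
    (hglsc : LowerSemicontinuous g) (hgpb : ProxBounded g)
    (hbdd : ∃ b : ℝ, ∀ x, (b : EReal) ≤ (f x : EReal) + g (c x))
    -- parameters of the safeguarded implicit AL method
    (θ κ : ℝ) (hθ : θ ∈ Set.Ioo (0 : ℝ) 1) (hκ : κ ∈ Set.Ioo (0 : ℝ) 1)
    (Y : Set (EuclideanSpace ℝ (Fin m))) (hYne : Y.Nonempty) (hYbdd : IsBounded Y)
    -- iterates of the method
    (x : ℕ → EuclideanSpace ℝ (Fin n))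
    (z yh y : ℕ → EuclideanSpace ℝ (Fin m))
    (μ etol : ℕ → ℝ)
    (hμ0 : 0 < μ 0)
    (hyh : ∀ k, yh k ∈ Y)
    (hetol : ∀ k, 0 ≤ etol k)
    (hz : ∀ k, z k ∈ proxSet g (μ k) (c (x k) + μ k • yh k))
    (hy : ∀ k, y k = yh k + (μ k)⁻¹ • (c (x k) - z k))
    (hdual : ∀ k, ‖gradient f (x k) +
        ContinuousLinearMap.adjoint (fderiv ℝ c (x k)) (y k)‖ ≤ etol k)
    (hμ1 : μ 1 = μ 0)
    (hμupd : ∀ k, 1 ≤ k →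
      μ (k + 1) =
        if ‖c (x k) - z k‖ ≤ θ * ‖c (x (k - 1)) - z (k - 1)‖ then μ k else κ * μ k)
    -- penalty parameters bounded away from zero
    (hμlo : ∃ mlo > (0 : ℝ), ∀ k, mlo ≤ μ k)
    -- descent condition  L_{μ_k}(xᵏ, ŷᵏ) ≤ L_{μ_k}(xᵏ⁻¹, ŷᵏ)  for all k
    (hdesc : ∀ k : ℕ,
      ((f (x (k + 1)) : EReal) + ⨅ w, (g w +
          (((inner ℝ (yh (k + 1)) (c (x (k + 1)) - w) : ℝ)
            + ‖c (x (k + 1)) - w‖ ^ 2 / (2 * μ (k + 1)) : ℝ) : EReal))) ≤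
      ((f (x k) : EReal) + ⨅ w, (g w +
          (((inner ℝ (yh (k + 1)) (c (x k) - w) : ℝ)
            + ‖c (x k) - w‖ ^ 2 / (2 * μ (k + 1)) : ℝ) : EReal))))
    (xstar : EuclideanSpace ℝ (Fin n))
    (hacc : ∃ φ : ℕ → ℕ, StrictMono φ ∧ Tendsto (fun k => x (φ k)) atTop (𝓝 xstar)) :
    g (c xstar) ≠ ⊤ :=
  mu_bounded_away_AL_descent_implies_feasible_general c g hc hgproper hglsc θ κ hθ hκ Y hYbdd x z yh
    μ hyh hz hμupd hμlo xstar hacc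

end
end

section
/- Suppose g = δ_D is the indicator of a nonempty closed set D ⊆ ℝᵐ. Consider sequences generated by the safeguarded implicit AL method for problem (P), let x* be an accumulation point of {xᵏ}, and let {xᵏ}_{k∈K} be a subsequence with xᵏ → x* along K. If c(x*) lies in the interior of D, then yᵏ = 0 for all k ∈ K sufficiently large. -/
open Filter Topology Bornology

noncomputable section

variable {H : Type*} [NormedAddCommGroup H] [InnerProductSpace ℝ H]

/-! Since `g = δ_D`, each `zᵏ` is a nearest point of `D` to `uᵏ := c(xᵏ) + μₖ ŷᵏ`, and
`yᵏ = (uᵏ - zᵏ)/μₖ`. A nearest point lying in the interior of `D` is the point itself, so it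
suffices that `zᵏ → c(x*) ∈ int D` along `K`. If the penalty parameter is reduced infinitely
often, then `μₖ → 0`, so `uᵏ → c(x*)` and the nearest points follow, being at distance at most
`‖uᵏ - c(x*)‖` from `uᵏ`. Otherwise `Vᵏ⁺¹ ≤ θ Vᵏ` eventually, so `Vᵏ = ‖c(xᵏ) - zᵏ‖ → 0`. -/

lemma eq_of_mem_interior_of_forall_norm_sub_le {E : Type*} [NormedAddCommGroup E]
    [NormedSpace ℝ E] {D : Set E} {z u : E} (hz : z ∈ interior D)
    (hmin : ∀ w ∈ D, ‖z - u‖ ≤ ‖w - u‖) : z = u := by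
  have hseg : Tendsto (AffineMap.lineMap z u : ℝ → E) (𝓝[>] 0) (𝓝 z) := by
    simpa using ((AffineMap.lineMap_continuous (R := ℝ) (p := z) (q := u)).tendsto 0).mono_left
      nhdsWithin_le_nhds
  obtain ⟨t, htD, ht0, ht1⟩ := ((hseg.eventually (mem_interior_iff_mem_nhds.mp hz)).and
    (Ioo_mem_nhdsGT zero_lt_one)).exists
  have hshrink : ‖AffineMap.lineMap z u t - u‖ = (1 - t) * ‖z - u‖ := by
    rw [← dist_eq_norm, ← dist_eq_norm, dist_lineMap_right, Real.norm_of_nonneg (by linarith)]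
  have := hmin _ htD
  rw [hshrink] at this
  exact sub_eq_zero.mp (norm_le_zero_iff.mp (by nlinarith [norm_nonneg (z - u)]))

lemma tendsto_of_forall_norm_sub_le {E : Type*} [NormedAddCommGroup E] {D : Set E}
    {z u : ℕ → E} {p : E} (hp : p ∈ D) (hmin : ∀ k, ∀ w ∈ D, ‖z k - u k‖ ≤ ‖w - u k‖)
    (hu : Tendsto u atTop (𝓝 p)) : Tendsto z atTop (𝓝 p) := by
  rw [tendsto_iff_norm_sub_tendsto_zero] at hu ⊢
  refine squeeze_zero (fun _ => norm_nonneg _) (fun k => ?_) (by simpa using hu.const_mul 2)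
  calc ‖z k - p‖ ≤ ‖z k - u k‖ + ‖u k - p‖ := norm_sub_le_norm_sub_add_norm_sub _ _ _
    _ ≤ ‖p - u k‖ + ‖u k - p‖ := by gcongr; exact hmin k p hp
    _ = 2 * ‖u k - p‖ := by rw [norm_sub_rev]; ring

lemma mem_and_forall_norm_sub_le_of_mem_proxSet_indicator {E : Type*} [NormedAddCommGroup E]
    {g : E → EReal} {D : Set E} [DecidablePred (· ∈ D)]
    (hD : D.Nonempty) (hg : ∀ v, g v = if v ∈ D then (0 : EReal) else ⊤) {γ : ℝ} (hγ : 0 < γ)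
    {u z : E} (hz : z ∈ proxSet g γ u) : z ∈ D ∧ ∀ w ∈ D, ‖z - u‖ ≤ ‖w - u‖ := by
  obtain ⟨w₀, hw₀⟩ := hD
  have hzD : z ∈ D := by
    by_contra hzD
    simpa [hg, hzD, hw₀] using hz w₀
  refine ⟨hzD, fun w hw => ?_⟩
  have h := hz w
  rw [hg, hg, if_pos hzD, if_pos hw, zero_add, zero_add, EReal.coe_le_coe_iff,
    div_le_div_iff_of_pos_right (by positivity)] at h
  exact (pow_le_pow_iff_left₀ (norm_nonneg _) (norm_nonneg _) two_ne_zero).mp h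

lemma Antitone.tendsto_zero_of_frequently_le_mul {μ : ℕ → ℝ} {κ : ℝ} (hanti : Antitone μ)
    (hnonneg : ∀ k, 0 ≤ μ k) (hκ : κ < 1) (hfreq : ∃ᶠ k in atTop, μ (k + 1) ≤ κ * μ k) :
    Tendsto μ atTop (𝓝 0) := by
  have hlim := tendsto_atTop_ciInf hanti ⟨0, by rintro _ ⟨k, rfl⟩; exact hnonneg k⟩
  set L := ⨅ k, μ k
  have hL0 : 0 ≤ L := le_ciInf hnonneg
  have hstep : Tendsto (fun k => μ (k + 1) - κ * μ k) atTop (𝓝 (L - κ * L)) :=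
    ((tendsto_add_atTop_iff_nat 1).mpr hlim).sub (hlim.const_mul κ)
  have : L - κ * L ≤ 0 := le_of_tendsto_of_frequently hstep (hfreq.mono fun k hk => by linarith)
  have hL : L = 0 := by nlinarith
  rwa [hL] at hlim

lemma pos_of_eq_or_eq_mul {μ : ℕ → ℝ} {κ : ℝ} (hκ : 0 < κ) (hμ0 : 0 < μ 0)
    (hstep : ∀ k, μ (k + 1) = μ k ∨ μ (k + 1) = κ * μ k) (k : ℕ) : 0 < μ k := by
  induction k with
  | zero => exact hμ0
  | succ k ih => rcases hstep k with h | h <;> rw [h] <;> positivity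

lemma antitone_of_eq_or_eq_mul {μ : ℕ → ℝ} {κ : ℝ} (hκ : κ ≤ 1) (hnonneg : ∀ k, 0 ≤ μ k)
    (hstep : ∀ k, μ (k + 1) = μ k ∨ μ (k + 1) = κ * μ k) : Antitone μ :=
  antitone_nat_of_succ_le fun k => by
    rcases hstep k with h | h <;> rw [h]
    nlinarith [hnonneg k]

open Classical

theorem multipliers_vanish_for_inactive_constraints_general {n m : ℕ}
    (c : EuclideanSpace ℝ (Fin n) → EuclideanSpace ℝ (Fin m))
    (g : EuclideanSpace ℝ (Fin m) → EReal)
    (hc : ContDiff ℝ 1 c)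
    -- g is the indicator of a nonempty closed set D
    (D : Set (EuclideanSpace ℝ (Fin m))) (hDne : D.Nonempty)
    (hgD : ∀ v, g v = if v ∈ D then (0 : EReal) else ⊤)
    -- parameters of the safeguarded implicit AL method
    (θ κ : ℝ) (hθ : θ ∈ Set.Ioo (0 : ℝ) 1) (hκ : κ ∈ Set.Ioo (0 : ℝ) 1)
    (Y : Set (EuclideanSpace ℝ (Fin m))) (hYbdd : IsBounded Y)
    -- iterates of the method
    (x : ℕ → EuclideanSpace ℝ (Fin n))
    (z yh y : ℕ → EuclideanSpace ℝ (Fin m))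
    (μ : ℕ → ℝ)
    (hμ0 : 0 < μ 0)
    (hyh : ∀ k, yh k ∈ Y)
    (hz : ∀ k, z k ∈ proxSet g (μ k) (c (x k) + μ k • yh k))
    (hy : ∀ k, y k = yh k + (μ k)⁻¹ • (c (x k) - z k))
    (hμ1 : μ 1 = μ 0)
    (hμupd : ∀ k, 1 ≤ k →
      μ (k + 1) =
        if ‖c (x k) - z k‖ ≤ θ * ‖c (x (k - 1)) - z (k - 1)‖ then μ k else κ * μ k)
    -- accumulation point along a subsequence
    (xstar : EuclideanSpace ℝ (Fin n)) (φ : ℕ → ℕ) (hφ : StrictMono φ)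
    (hconv : Tendsto (fun k => x (φ k)) atTop (𝓝 xstar))
    (hint : c xstar ∈ interior D) :
    ∃ k0 : ℕ, ∀ k, k0 ≤ k → y (φ k) = 0 := by
  have hstep : ∀ k, μ (k + 1) = μ k ∨ μ (k + 1) = κ * μ k := by
    rintro (_ | k)
    · exact .inl hμ1
    · rw [hμupd (k + 1) k.succ_pos]; split_ifs <;> simp
  have hμpos := pos_of_eq_or_eq_mul hκ.1 hμ0 hstep
  have hproj k := mem_and_forall_norm_sub_le_of_mem_proxSet_indicator hDne hgD (hμpos k) (hz k)
  have hcx : Tendsto (fun k => c (x (φ k))) atTop (𝓝 (c xstar)) :=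
    (hc.continuous.tendsto xstar).comp hconv
  have hzlim : Tendsto (fun k => z (φ k)) atTop (𝓝 (c xstar)) := by
    by_cases hV : ∀ᶠ k in atTop, ‖c (x (k + 1)) - z (k + 1)‖ ≤ θ * ‖c (x k) - z k‖
    · have hV0 := (summable_of_ratio_norm_eventually_le (f := fun k => c (x k) - z k) hθ.2 hV
        ).tendsto_atTop_zero
      simpa using hcx.sub (hV0.comp hφ.tendsto_atTop)
    · have hfreq : ∃ᶠ k in atTop, μ (k + 1) ≤ κ * μ k :=
        (tendsto_add_atTop_nat 1).frequently <| (Filter.not_eventually.mp hV).mono fun k hk => by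
          rw [hμupd (k + 1) k.succ_pos, Nat.add_sub_cancel, if_neg hk]
      have hμ := (antitone_of_eq_or_eq_mul hκ.2.le (fun k => (hμpos k).le) hstep
        ).tendsto_zero_of_frequently_le_mul (fun k => (hμpos k).le) hκ.2 hfreq
      obtain ⟨M, hM⟩ := isBounded_iff_forall_norm_le.mp hYbdd
      have hshift : Tendsto (fun k => μ (φ k) • yh (φ k)) atTop (𝓝 0) :=
        (hμ.comp hφ.tendsto_atTop).zero_smul_isBoundedUnder_le
          (isBoundedUnder_of ⟨M, fun k => hM _ (hyh _)⟩)
      exact tendsto_of_forall_norm_sub_le (interior_subset hint) (fun k => (hproj (φ k)).2)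
        (by simpa using hcx.add hshift)
  obtain ⟨k0, hk0⟩ := eventually_atTop.mp (hzlim.eventually (isOpen_interior.mem_nhds hint))
  refine ⟨k0, fun k hk => ?_⟩
  have hzu := eq_of_mem_interior_of_forall_norm_sub_le (hk0 k hk) (hproj (φ k)).2
  rw [hy, hzu, sub_add_cancel_left, smul_neg, smul_smul, inv_mul_cancel₀ (hμpos _).ne', one_smul,
    add_neg_cancel]

/-- If g is the indicator of a nonempty closed set D and the subsequence
limit satisfies c(x*) ∈ int D, then the multipliers yᵏ vanish along the subsequence
eventually. -/
theorem multipliers_vanish_for_inactive_constraints {n m : ℕ}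
    (f : EuclideanSpace ℝ (Fin n) → ℝ)
    (c : EuclideanSpace ℝ (Fin n) → EuclideanSpace ℝ (Fin m))
    (g : EuclideanSpace ℝ (Fin m) → EReal)
    (hf : ContDiff ℝ 1 f) (hc : ContDiff ℝ 1 c)
    -- g is the indicator of a nonempty closed set D
    (D : Set (EuclideanSpace ℝ (Fin m))) (hDne : D.Nonempty) (hDcl : IsClosed D)
    (hgD : ∀ v, g v = if v ∈ D then (0 : EReal) else ⊤)
    (hbdd : ∃ b : ℝ, ∀ x, (b : EReal) ≤ (f x : EReal) + g (c x))
    -- parameters of the safeguarded implicit AL method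
    (θ κ : ℝ) (hθ : θ ∈ Set.Ioo (0 : ℝ) 1) (hκ : κ ∈ Set.Ioo (0 : ℝ) 1)
    (Y : Set (EuclideanSpace ℝ (Fin m))) (hYne : Y.Nonempty) (hYbdd : IsBounded Y)
    -- iterates of the method
    (x : ℕ → EuclideanSpace ℝ (Fin n))
    (z yh y : ℕ → EuclideanSpace ℝ (Fin m))
    (μ etol : ℕ → ℝ)
    (hμ0 : 0 < μ 0)
    (hyh : ∀ k, yh k ∈ Y)
    (hetol : ∀ k, 0 ≤ etol k)
    (hz : ∀ k, z k ∈ proxSet g (μ k) (c (x k) + μ k • yh k))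
    (hy : ∀ k, y k = yh k + (μ k)⁻¹ • (c (x k) - z k))
    (hdual : ∀ k, ‖gradient f (x k) +
        ContinuousLinearMap.adjoint (fderiv ℝ c (x k)) (y k)‖ ≤ etol k)
    (hμ1 : μ 1 = μ 0)
    (hμupd : ∀ k, 1 ≤ k →
      μ (k + 1) =
        if ‖c (x k) - z k‖ ≤ θ * ‖c (x (k - 1)) - z (k - 1)‖ then μ k else κ * μ k)
    -- accumulation point along a subsequence
    (xstar : EuclideanSpace ℝ (Fin n)) (φ : ℕ → ℕ) (hφ : StrictMono φ)
    (hconv : Tendsto (fun k => x (φ k)) atTop (𝓝 xstar))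
    (hint : c xstar ∈ interior D) :
    ∃ k0 : ℕ, ∀ k, k0 ≤ k → y (φ k) = 0 :=
  multipliers_vanish_for_inactive_constraints_general c g hc D hDne hgD θ κ hθ hκ Y hYbdd x z yh y μ
    hμ0 hyh hz hy hμ1 hμupd xstar φ hφ hconv hint

end
end

section
/- Suppose dom g is closed. Consider sequences generated by the safeguarded implicit AL method for problem (P) with bounded tolerances {ε_k}. Let x* ∈ ℝⁿ be an accumulation point of {xᵏ}, with xᵏ → x* along a subsequence K. Then x* is M-stationary for the feasibility problem of minimizing dist²(c(x), dom g): there exists z* ∈ dom g such that Jc(x*)ᵀ (c(x*) − z*) = 0 and (c(x*) − z*, 0) ∈ N^lim_{epi g}(z*, g(z*)), where epi g is the epigraph of g. -/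
/-!
Either the penalty parameter is eventually constant or it tends to zero. In the first case the
update rule forces the residuals `‖c(xᵏ) - zᵏ‖` to decay geometrically, so `c(x*)` lies in the
closed set `dom g` and `z* = c(x*)` works. In the second case prox-boundedness keeps the prox points
`zᵏ` bounded; a cluster point `z*` lies in `dom g` and, letting `μₖ → 0` in the prox inequality, is
a nearest point of `dom g` to `c(x*)`. Since `c(xᵏ) - zᵏ = μₖ (yᵏ - ŷᵏ)` and the approximate
stationarity of `xᵏ` keeps `Jc(xᵏ)ᵀ (yᵏ - ŷᵏ)` bounded, `Jc(x*)ᵀ (c(x*) - z*) = 0`.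
Finally, if `z*` is a nearest point of `dom g` to `v`, then `(z*, g z*)` is a nearest point of
`epi g` to `(v, g z*)`, so `(v - z*, 0)` is a proximal, hence limiting, normal to `epi g`.
-/

open Filter Topology Bornology

noncomputable section

variable {H : Type*} [NormedAddCommGroup H] [InnerProductSpace ℝ H]

section PenaltyUpdate

variable {μ : ℕ → ℝ} {κ : ℝ} {P : ℕ → Prop} [DecidablePred P]

lemma penalty_pos (hκ : 0 < κ) (hμ0 : 0 < μ 0) (hμ1 : μ 1 = μ 0)
    (hμ : ∀ k, 1 ≤ k → μ (k + 1) = if P k then μ k else κ * μ k) (k : ℕ) : 0 < μ k := by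
  induction k with
  | zero => exact hμ0
  | succ k ih =>
    rcases Nat.eq_zero_or_pos k with rfl | hk
    · rwa [hμ1]
    · rw [hμ k hk]
      split_ifs
      exacts [ih, mul_pos hκ ih]

lemma penalty_antitone (hκ : κ ∈ Set.Ioo 0 1) (hμ0 : 0 < μ 0) (hμ1 : μ 1 = μ 0)
    (hμ : ∀ k, 1 ≤ k → μ (k + 1) = if P k then μ k else κ * μ k) : Antitone μ := by
  refine antitone_nat_of_succ_le fun k => ?_
  rcases Nat.eq_zero_or_pos k with rfl | hk
  · rw [hμ1]
  · rw [hμ k hk]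
    split_ifs
    · exact le_rfl
    · exact mul_le_of_le_one_left (penalty_pos hκ.1 hμ0 hμ1 hμ k).le hκ.2.le

lemma penalty_eventually_or_tendsto_zero (hκ : κ ∈ Set.Ioo 0 1) (hμ0 : 0 < μ 0)
    (hμ1 : μ 1 = μ 0) (hμ : ∀ k, 1 ≤ k → μ (k + 1) = if P k then μ k else κ * μ k) :
    (∃ N, ∀ k ≥ N, P k) ∨ Tendsto μ atTop (𝓝 0) := by
  refine or_iff_not_imp_left.mpr fun hP => ?_
  push Not at hP
  have hlim : Tendsto μ atTop (𝓝 (⨅ k, μ k)) :=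
    tendsto_atTop_ciInf (penalty_antitone hκ hμ0 hμ1 hμ)
      ⟨0, by rintro _ ⟨k, rfl⟩; exact (penalty_pos hκ.1 hμ0 hμ1 hμ k).le⟩
  -- each of the infinitely many failures of `P` shrinks `μ` by `κ`, forcing `inf μ = κ inf μ`
  have hshrink : ∃ᶠ k in atTop, μ (k + 1) = κ * μ k := by
    refine frequently_atTop.mpr fun N => ?_
    obtain ⟨k, hk, hPk⟩ := hP (max N 1)
    exact ⟨k, le_of_max_le_left hk, by rw [hμ k (le_of_max_le_right hk), if_neg hPk]⟩
  have hL := tendsto_nhds_unique_of_frequently_eq ((tendsto_add_atTop_iff_nat 1).mpr hlim)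
    (hlim.const_mul κ) hshrink
  have hL0 : (1 - κ) * ⨅ k, μ k = 0 := by linarith
  rwa [(mul_eq_zero.mp hL0).resolve_left (by linarith [hκ.2])] at hlim

end PenaltyUpdate

lemma tendsto_zero_of_eventually_le_mul_s9 {v : ℕ → ℝ} {θ : ℝ} (hθ : θ ∈ Set.Ico 0 1)
    (hv : ∀ k, 0 ≤ v k) {N : ℕ} (hN : ∀ k ≥ N, v (k + 1) ≤ θ * v k) :
    Tendsto v atTop (𝓝 0) := by
  rw [← tendsto_add_atTop_iff_nat N]
  have hgeom : ∀ j, v (j + N) ≤ θ ^ j * v N := fun j => by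
    simpa using le_geom (u := fun j => v (j + N)) hθ.1 j fun k _ => by
      simpa only [Nat.add_right_comm k 1 N] using hN (k + N) (Nat.le_add_left N k)
  refine squeeze_zero (fun j => hv _) hgeom ?_
  simpa using (tendsto_pow_atTop_nhds_zero_of_lt_one hθ.1 hθ.2).mul_const (v N)

section Prox

variable {E : Type*} [NormedAddCommGroup E] {g : E → EReal} {γ b : ℝ} {u z w : E}

lemma ne_top_of_mem_proxSet (hz : z ∈ proxSet g γ u) (hw : g w ≠ ⊤) : g z ≠ ⊤ := by
  intro h
  have h1 := hz w
  rw [h, EReal.top_add_coe, top_le_iff] at h1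
  exact (EReal.add_lt_top hw (EReal.coe_ne_top _)).ne h1

lemma norm_sub_sq_le_of_mem_proxSet (hgbot : ∀ z, g z ≠ ⊥) (hγ : 0 < γ)
    (hz : z ∈ proxSet g γ u) (hw : g w ≠ ⊤) :
    ‖z - u‖ ^ 2 ≤ 2 * γ * ((g w).toReal - (g z).toReal) + ‖w - u‖ ^ 2 := by
  have h := hz w
  rw [← EReal.coe_toReal (ne_top_of_mem_proxSet hz hw) (hgbot z),
    ← EReal.coe_toReal hw (hgbot w), ← EReal.coe_add, ← EReal.coe_add,
    EReal.coe_le_coe_iff] at h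
  have h2γ : (0 : ℝ) < 2 * γ := by positivity
  have hscaled := mul_le_mul_of_nonneg_left h h2γ.le
  rw [mul_add, mul_add, mul_div_cancel₀ _ h2γ.ne', mul_div_cancel₀ _ h2γ.ne'] at hscaled
  linarith

lemma le_toReal_add_of_proxBound (hgbot : ∀ z, g z ≠ ⊥)
    (hb : ∀ z, (b : EReal) ≤ g z + ((‖z‖ ^ 2 / (2 * γ) : ℝ) : EReal)) (hz : g z ≠ ⊤) :
    b ≤ (g z).toReal + ‖z‖ ^ 2 / (2 * γ) := by
  have h := hb z
  rwa [← EReal.coe_toReal hz (hgbot z), ← EReal.coe_add, EReal.coe_le_coe_iff] at h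

lemma norm_sq_le_of_mem_proxSet (hgbot : ∀ z, g z ≠ ⊥)
    (hb : ∀ z, (b : EReal) ≤ g z + ((‖z‖ ^ 2 / (2 * γ) : ℝ) : EReal)) {μ : ℝ} (hμ : 0 < μ)
    (hμγ : 4 * μ ≤ γ) (hz : z ∈ proxSet g μ u) (hw : g w ≠ ⊤) :
    ‖z‖ ^ 2 ≤ 8 * μ * ((g w).toReal - b) + 4 * ‖w - u‖ ^ 2 + 4 * ‖u‖ ^ 2 := by
  have hprox := norm_sub_sq_le_of_mem_proxSet hgbot hμ hz hw
  have hlow := le_toReal_add_of_proxBound hgbot hb (ne_top_of_mem_proxSet hz hw)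
  have hγ : 0 < γ := by linarith
  have hq : ‖z‖ ^ 2 = 2 * γ * (‖z‖ ^ 2 / (2 * γ)) := by field_simp
  have hsplit : ‖z‖ ^ 2 ≤ 2 * ‖z - u‖ ^ 2 + 2 * ‖u‖ ^ 2 := by
    have := norm_add_le (z - u) u
    rw [sub_add_cancel] at this
    nlinarith [mul_self_le_mul_self (norm_nonneg z) this, sq_nonneg (‖z - u‖ - ‖u‖)]
  nlinarith [mul_le_mul_of_nonneg_right hμγ (by positivity : 0 ≤ ‖z‖ ^ 2 / (2 * γ))]

end Prox

section ProxSequence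

variable {E : Type*} [NormedAddCommGroup E] {g : E → EReal} {μ : ℕ → ℝ} {u z : ℕ → E} {ulim : E}

lemma exists_subseq_tendsto_of_mem_proxSet [ProperSpace E] (hgbot : ∀ z, g z ≠ ⊥)
    (hgpb : ProxBounded g) {w : E} (hw : g w ≠ ⊤) (hμpos : ∀ k, 0 < μ k)
    (hμ : Tendsto μ atTop (𝓝 0)) (hu : Tendsto u atTop (𝓝 ulim))
    (hz : ∀ k, z k ∈ proxSet g (μ k) (u k)) :
    ∃ zlim, ∃ ψ : ℕ → ℕ, StrictMono ψ ∧ Tendsto (z ∘ ψ) atTop (𝓝 zlim) := by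
  obtain ⟨γ, hγ, b, hb⟩ := hgpb
  have hbound : Tendsto (fun k => 8 * μ k * ((g w).toReal - b) + 4 * ‖w - u k‖ ^ 2 +
      4 * ‖u k‖ ^ 2) atTop
      (𝓝 (8 * 0 * ((g w).toReal - b) + 4 * ‖w - ulim‖ ^ 2 + 4 * ‖ulim‖ ^ 2)) :=
    (((hμ.const_mul 8).mul_const _).add (((tendsto_const_nhds.sub hu).norm.pow 2).const_mul 4)).add
      ((hu.norm.pow 2).const_mul 4)
  obtain ⟨C, hC⟩ := hbound.bddAbove_range
  have hzC : ∀ᶠ k in atTop, z k ∈ Metric.closedBall 0 √C := by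
    filter_upwards [hμ.eventually (eventually_le_nhds (by positivity : 0 < γ / 4))] with k hk
    rw [mem_closedBall_zero_iff, ← abs_norm]
    exact Real.abs_le_sqrt ((norm_sq_le_of_mem_proxSet hgbot hb (hμpos k) (by linarith) (hz k)
      hw).trans (hC ⟨k, rfl⟩))
  obtain ⟨zlim, -, ψ, hψ, hzψ⟩ :=
    tendsto_subseq_of_frequently_bounded Metric.isBounded_closedBall hzC.frequently
  exact ⟨zlim, ψ, hψ, hzψ⟩

lemma norm_sub_le_of_tendsto_mem_proxSet (hgbot : ∀ z, g z ≠ ⊥) (hgpb : ProxBounded g)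
    (hμpos : ∀ k, 0 < μ k) (hμ : Tendsto μ atTop (𝓝 0)) (hu : Tendsto u atTop (𝓝 ulim))
    (hz : ∀ k, z k ∈ proxSet g (μ k) (u k)) {zlim : E} (hzconv : Tendsto z atTop (𝓝 zlim))
    {w : E} (hw : g w ≠ ⊤) : ‖zlim - ulim‖ ≤ ‖w - ulim‖ := by
  obtain ⟨γ, hγ, b, hb⟩ := hgpb
  have hle : ∀ k, ‖z k - u k‖ ^ 2 ≤
      2 * μ k * ((g w).toReal - b + ‖z k‖ ^ 2 / (2 * γ)) + ‖w - u k‖ ^ 2 := fun k => by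
    have hprox := norm_sub_sq_le_of_mem_proxSet hgbot (hμpos k) (hz k) hw
    have hlow := le_toReal_add_of_proxBound hgbot hb (ne_top_of_mem_proxSet (hz k) hw)
    nlinarith [hμpos k]
  have hlhs : Tendsto (fun k => ‖z k - u k‖ ^ 2) atTop (𝓝 (‖zlim - ulim‖ ^ 2)) :=
    (hzconv.sub hu).norm.pow 2
  have hrhs : Tendsto (fun k => 2 * μ k * ((g w).toReal - b + ‖z k‖ ^ 2 / (2 * γ)) +
      ‖w - u k‖ ^ 2) atTop
      (𝓝 (2 * 0 * ((g w).toReal - b + ‖zlim‖ ^ 2 / (2 * γ)) + ‖w - ulim‖ ^ 2)) :=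
    ((hμ.const_mul 2).mul (tendsto_const_nhds.add ((hzconv.norm.pow 2).div_const _))).add
      ((tendsto_const_nhds.sub hu).norm.pow 2)
  rw [mul_zero, zero_mul, zero_add] at hrhs
  exact (pow_le_pow_iff_left₀ (norm_nonneg _) (norm_nonneg _) two_ne_zero).mp
    (le_of_tendsto_of_tendsto' hlhs hrhs hle)

end ProxSequence

section NormalCone

variable {E : Type*} [NormedAddCommGroup E] [NormedSpace ℝ E] {D : Set E} {p v : E}

lemma norm_smul_le_of_forall_norm_le (h : ∀ q ∈ D, ‖v‖ ≤ ‖q - (p + v)‖) {t : ℝ}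
    (ht0 : 0 ≤ t) (ht1 : t ≤ 1) {q : E} (hq : q ∈ D) : ‖t • v‖ ≤ ‖q - (p + t • v)‖ := by
  have hsplit : q - (p + v) = (q - (p + t • v)) - (1 - t) • v := by
    rw [sub_smul, one_smul]; abel
  have htri := h q hq
  rw [hsplit] at htri
  replace htri := htri.trans (norm_sub_le _ _)
  rw [norm_smul, Real.norm_of_nonneg (sub_nonneg.2 ht1)] at htri
  rw [norm_smul, Real.norm_of_nonneg ht0]
  linarith

lemma mem_limNormalCone_of_forall_norm_le (hp : p ∈ D) (h : ∀ q ∈ D, ‖v‖ ≤ ‖q - (p + v)‖) :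
    v ∈ limNormalCone D p := by
  -- approach `p` along the segment towards `p + v`, on which `p` stays a nearest point
  set t : ℕ → ℝ := fun k => ((k : ℝ) + 1)⁻¹
  have ht0 : ∀ k, 0 < t k := fun k => by positivity
  have ht : Tendsto t atTop (𝓝 0) := by
    simpa [one_div] using tendsto_one_div_add_atTop_nhds_zero_nat (𝕜 := ℝ)
  refine ⟨fun k => p + t k • v, fun _ => p, fun k => (t k)⁻¹, fun k => (inv_pos.2 (ht0 k)).le,
    fun k => ⟨hp, fun q hq => ?_⟩, ?_, ?_⟩
  · have ht1 : t k ≤ 1 := inv_le_one_of_one_le₀ (by simp)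
    simpa using norm_smul_le_of_forall_norm_le h (ht0 k).le ht1 hq
  · simpa using tendsto_const_nhds.add (ht.smul_const v)
  · refine tendsto_const_nhds.congr fun k => ?_
    simp [smul_smul, inv_mul_cancel₀ (ht0 k).ne']

lemma mem_limNormalCone_epigraph_of_forall_norm_le {g : E → EReal} {v p : E} (hp : g p ≠ ⊤)
    (hproj : ∀ q, g q ≠ ⊤ → ‖p - v‖ ≤ ‖q - v‖) :
    (WithLp.equiv 2 (E × ℝ)).symm (v - p, (0 : ℝ)) ∈
      limNormalCone
        {q : WithLp 2 (E × ℝ) |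
          g ((WithLp.equiv 2 (E × ℝ)) q).1 ≤ ((((WithLp.equiv 2 (E × ℝ)) q).2 : ℝ) : EReal)}
        ((WithLp.equiv 2 (E × ℝ)).symm (p, (g p).toReal)) := by
  refine mem_limNormalCone_of_forall_norm_le (by simpa using EReal.le_coe_toReal hp)
    fun q hq => ?_
  have hdom : g (WithLp.equiv 2 (E × ℝ) q).1 ≠ ⊤ := ne_top_of_le_ne_top (EReal.coe_ne_top _) hq
  calc ‖(WithLp.equiv 2 (E × ℝ)).symm (v - p, (0 : ℝ))‖ = ‖p - v‖ := by
        simp [norm_sub_rev]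
    _ ≤ ‖(WithLp.equiv 2 (E × ℝ) q).1 - v‖ := hproj _ hdom
    _ = ‖(q - ((WithLp.equiv 2 (E × ℝ)).symm (p, (g p).toReal) +
          (WithLp.equiv 2 (E × ℝ)).symm (v - p, (0 : ℝ)))).fst‖ := by
        congr 1
        simp
    _ ≤ _ := WithLp.norm_fst_le E _

end NormalCone

lemma apply_eq_zero_of_eq_add_inv_smul {E F : Type*} [NormedAddCommGroup E] [NormedSpace ℝ E]
    [NormedAddCommGroup F] [NormedSpace ℝ F] {A : ℕ → F →L[ℝ] E} {A' : F →L[ℝ] E}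
    {d : ℕ → E} {d' : E} {r yh y : ℕ → F} {r' : F} {μ : ℕ → ℝ} {R C : ℝ}
    (hA : Tendsto A atTop (𝓝 A')) (hd : Tendsto d atTop (𝓝 d'))
    (hr : Tendsto r atTop (𝓝 r')) (hμ : Tendsto μ atTop (𝓝 0)) (hμ0 : ∀ k, μ k ≠ 0)
    (hy : ∀ k, y k = yh k + (μ k)⁻¹ • r k) (hyh : ∀ k, ‖yh k‖ ≤ R)
    (hres : ∀ k, ‖d k + A k (y k)‖ ≤ C) : A' r' = 0 := by
  have hlim : Tendsto (fun k => A k (r k)) atTop (𝓝 (A' r')) :=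
    (isBoundedBilinearMap_apply.continuous.tendsto (A', r')).comp (hA.prodMk_nhds hr)
  -- `r = μ (y - yh)`, and `A (y - yh)` stays bounded
  have hrk : ∀ k, A k (r k) = μ k • ((d k + A k (y k)) - d k - A k (yh k)) := fun k => by
    rw [add_sub_cancel_left, ← map_sub, ← map_smul, hy k, add_sub_cancel_left, smul_smul,
      mul_inv_cancel₀ (hμ0 k), one_smul]
  obtain ⟨CA, hCA⟩ := hA.norm.bddAbove_range
  obtain ⟨Cd, hCd⟩ := hd.norm.bddAbove_range
  have hbdd : IsBoundedUnder (· ≤ ·) atTop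
      (norm ∘ fun k => (d k + A k (y k)) - d k - A k (yh k)) := by
    refine isBoundedUnder_of ⟨C + Cd + CA * R, fun k => ?_⟩
    have hAyh : ‖A k (yh k)‖ ≤ CA * R :=
      ((A k).le_opNorm _).trans (mul_le_mul (hCA ⟨k, rfl⟩) (hyh k) (norm_nonneg _)
        ((norm_nonneg _).trans (hCA ⟨k, rfl⟩)))
    have htri₁ := norm_sub_le (d k + A k (y k) - d k) (A k (yh k))
    have htri₂ := norm_sub_le (d k + A k (y k)) (d k)
    simp only [Function.comp_apply]
    linarith [hres k, hCd ⟨k, rfl⟩]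
  have hzero : Tendsto (fun k => A k (r k)) atTop (𝓝 0) := by
    simpa only [hrk] using hμ.zero_smul_isBoundedUnder_le hbdd
  exact tendsto_nhds_unique hlim hzero

lemma ContDiff.continuous_gradient {E : Type*} [NormedAddCommGroup E] [InnerProductSpace ℝ E]
    [CompleteSpace E] {f : E → ℝ} (hf : ContDiff ℝ 1 f) : Continuous (gradient f) :=
  (InnerProductSpace.toDual ℝ E).symm.continuous.comp (hf.continuous_fderiv one_ne_zero)

theorem ALM_accumulation_is_stationary_for_infeasibility_general {n m : ℕ}
    (f : EuclideanSpace ℝ (Fin n) → ℝ)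
    (c : EuclideanSpace ℝ (Fin n) → EuclideanSpace ℝ (Fin m))
    (g : EuclideanSpace ℝ (Fin m) → EReal)
    (hf : ContDiff ℝ 1 f) (hc : ContDiff ℝ 1 c)
    (hgproper : ∃ z, g z ≠ ⊤) (hgbot : ∀ z, g z ≠ ⊥)
    (hgpb : ProxBounded g)
    -- parameters of the safeguarded implicit AL method
    (θ κ : ℝ) (hθ : θ ∈ Set.Ioo (0 : ℝ) 1) (hκ : κ ∈ Set.Ioo (0 : ℝ) 1)
    (Y : Set (EuclideanSpace ℝ (Fin m))) (hYbdd : IsBounded Y)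
    -- iterates of the method
    (x : ℕ → EuclideanSpace ℝ (Fin n))
    (z yh y : ℕ → EuclideanSpace ℝ (Fin m))
    (μ etol : ℕ → ℝ)
    (hμ0 : 0 < μ 0)
    (hyh : ∀ k, yh k ∈ Y)
    (hz : ∀ k, z k ∈ proxSet g (μ k) (c (x k) + μ k • yh k))
    (hy : ∀ k, y k = yh k + (μ k)⁻¹ • (c (x k) - z k))
    (hdual : ∀ k, ‖gradient f (x k) +
        ContinuousLinearMap.adjoint (fderiv ℝ c (x k)) (y k)‖ ≤ etol k)
    (hμ1 : μ 1 = μ 0)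
    (hμupd : ∀ k, 1 ≤ k →
      μ (k + 1) =
        if ‖c (x k) - z k‖ ≤ θ * ‖c (x (k - 1)) - z (k - 1)‖ then μ k else κ * μ k)
    -- dom g closed
    (hdomcl : IsClosed {w : EuclideanSpace ℝ (Fin m) | g w ≠ ⊤})
    -- bounded tolerances
    (hetolbdd : ∃ Ce : ℝ, ∀ k, etol k ≤ Ce)
    -- accumulation point along a subsequence
    (xstar : EuclideanSpace ℝ (Fin n)) (φ : ℕ → ℕ) (hφ : StrictMono φ)
    (hconv : Tendsto (fun k => x (φ k)) atTop (𝓝 xstar)) :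
    ∃ zstar : EuclideanSpace ℝ (Fin m), g zstar ≠ ⊤ ∧
      ContinuousLinearMap.adjoint (fderiv ℝ c xstar) (c xstar - zstar) = 0 ∧
      (WithLp.equiv 2 (EuclideanSpace ℝ (Fin m) × ℝ)).symm (c xstar - zstar, (0 : ℝ)) ∈
        limNormalCone
          {q : WithLp 2 (EuclideanSpace ℝ (Fin m) × ℝ) |
            g ((WithLp.equiv 2 (EuclideanSpace ℝ (Fin m) × ℝ)) q).1 ≤
              ((((WithLp.equiv 2 (EuclideanSpace ℝ (Fin m) × ℝ)) q).2 : ℝ) : EReal)}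
          ((WithLp.equiv 2 (EuclideanSpace ℝ (Fin m) × ℝ)).symm
            (zstar, (g zstar).toReal)) := by
  obtain ⟨w₀, hw₀⟩ := hgproper
  have hμpos := penalty_pos hκ.1 hμ0 hμ1 hμupd
  have hztop : ∀ k, g (z k) ≠ ⊤ := fun k => ne_top_of_mem_proxSet (hz k) hw₀
  have hcx : Tendsto (fun k => c (x (φ k))) atTop (𝓝 (c xstar)) :=
    (hc.continuous.tendsto xstar).comp hconv
  suffices ∃ zstar, g zstar ≠ ⊤ ∧
      ContinuousLinearMap.adjoint (fderiv ℝ c xstar) (c xstar - zstar) = 0 ∧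
      ∀ w, g w ≠ ⊤ → ‖zstar - c xstar‖ ≤ ‖w - c xstar‖ by
    obtain ⟨zstar, hdom, hkernel, hproj⟩ := this
    exact ⟨zstar, hdom, hkernel, mem_limNormalCone_epigraph_of_forall_norm_le hdom hproj⟩
  rcases penalty_eventually_or_tendsto_zero hκ hμ0 hμ1 hμupd with ⟨N, hN⟩ | hμlim
  · -- the residuals decay linearly, so `c xstar` is itself feasible
    have hV : Tendsto (fun k => ‖c (x k) - z k‖) atTop (𝓝 0) :=
      tendsto_zero_of_eventually_le_mul_s9 ⟨hθ.1.le, hθ.2⟩ (fun k => norm_nonneg _)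
        (N := N) fun k hk => by simpa using hN (k + 1) (by omega)
    have hzφ : Tendsto (fun k => z (φ k)) atTop (𝓝 (c xstar)) := by
      simpa using hcx.sub (tendsto_zero_iff_norm_tendsto_zero.mpr (hV.comp hφ.tendsto_atTop))
    exact ⟨c xstar, hdomcl.mem_of_tendsto hzφ (.of_forall fun k => hztop _), by simp,
      fun w _ => by simp⟩
  · obtain ⟨R, hR⟩ := isBounded_iff_forall_norm_le.mp hYbdd
    obtain ⟨Ce, hCe⟩ := hetolbdd
    have hμφ := hμlim.comp hφ.tendsto_atTop
    have hu : Tendsto (fun k => c (x (φ k)) + μ (φ k) • yh (φ k)) atTop (𝓝 (c xstar)) := by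
      simpa using hcx.add (hμφ.zero_smul_isBoundedUnder_le
        (isBoundedUnder_of ⟨R, fun k => hR _ (hyh _)⟩))
    obtain ⟨zstar, ψ, hψ, hzψ⟩ := exists_subseq_tendsto_of_mem_proxSet hgbot hgpb hw₀
      (fun k => hμpos _) hμφ hu fun k => hz _
    have hψ_atTop := hψ.tendsto_atTop
    refine ⟨zstar, hdomcl.mem_of_tendsto hzψ (.of_forall fun k => hztop _), ?_,
      fun w hw => norm_sub_le_of_tendsto_mem_proxSet hgbot hgpb (fun k => hμpos _)
        (hμφ.comp hψ_atTop) (hu.comp hψ_atTop) (fun k => hz _) hzψ hw⟩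
    have hxψ := hconv.comp hψ_atTop
    exact apply_eq_zero_of_eq_add_inv_smul
      ((ContinuousLinearMap.adjoint.continuous.comp (hc.continuous_fderiv one_ne_zero)).tendsto
        xstar |>.comp hxψ)
      (hf.continuous_gradient.tendsto xstar |>.comp hxψ) ((hcx.comp hψ_atTop).sub hzψ)
      (hμφ.comp hψ_atTop) (fun k => (hμpos _).ne') (fun k => hy _) (fun k => hR _ (hyh _))
      fun k => (hdual _).trans (hCe _)

/-- With dom g closed and bounded tolerances, every accumulation point
of the safeguarded implicit AL method is M-stationary for the feasibility problem of
minimizing dist²(c(x), dom g). -/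
theorem ALM_accumulation_is_stationary_for_infeasibility {n m : ℕ}
    (f : EuclideanSpace ℝ (Fin n) → ℝ)
    (c : EuclideanSpace ℝ (Fin n) → EuclideanSpace ℝ (Fin m))
    (g : EuclideanSpace ℝ (Fin m) → EReal)
    (hf : ContDiff ℝ 1 f) (hc : ContDiff ℝ 1 c)
    (hgproper : ∃ z, g z ≠ ⊤) (hgbot : ∀ z, g z ≠ ⊥)
    (hglsc : LowerSemicontinuous g) (hgpb : ProxBounded g)
    (hbdd : ∃ b : ℝ, ∀ x, (b : EReal) ≤ (f x : EReal) + g (c x))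
    -- parameters of the safeguarded implicit AL method
    (θ κ : ℝ) (hθ : θ ∈ Set.Ioo (0 : ℝ) 1) (hκ : κ ∈ Set.Ioo (0 : ℝ) 1)
    (Y : Set (EuclideanSpace ℝ (Fin m))) (hYne : Y.Nonempty) (hYbdd : IsBounded Y)
    -- iterates of the method
    (x : ℕ → EuclideanSpace ℝ (Fin n))
    (z yh y : ℕ → EuclideanSpace ℝ (Fin m))
    (μ etol : ℕ → ℝ)
    (hμ0 : 0 < μ 0)
    (hyh : ∀ k, yh k ∈ Y)
    (hetol : ∀ k, 0 ≤ etol k)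
    (hz : ∀ k, z k ∈ proxSet g (μ k) (c (x k) + μ k • yh k))
    (hy : ∀ k, y k = yh k + (μ k)⁻¹ • (c (x k) - z k))
    (hdual : ∀ k, ‖gradient f (x k) +
        ContinuousLinearMap.adjoint (fderiv ℝ c (x k)) (y k)‖ ≤ etol k)
    (hμ1 : μ 1 = μ 0)
    (hμupd : ∀ k, 1 ≤ k →
      μ (k + 1) =
        if ‖c (x k) - z k‖ ≤ θ * ‖c (x (k - 1)) - z (k - 1)‖ then μ k else κ * μ k)
    -- dom g closed
    (hdomcl : IsClosed {w : EuclideanSpace ℝ (Fin m) | g w ≠ ⊤})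
    -- bounded tolerances
    (hetolbdd : ∃ Ce : ℝ, ∀ k, etol k ≤ Ce)
    -- accumulation point along a subsequence
    (xstar : EuclideanSpace ℝ (Fin n)) (φ : ℕ → ℕ) (hφ : StrictMono φ)
    (hconv : Tendsto (fun k => x (φ k)) atTop (𝓝 xstar)) :
    ∃ zstar : EuclideanSpace ℝ (Fin m), g zstar ≠ ⊤ ∧
      ContinuousLinearMap.adjoint (fderiv ℝ c xstar) (c xstar - zstar) = 0 ∧
      (WithLp.equiv 2 (EuclideanSpace ℝ (Fin m) × ℝ)).symm (c xstar - zstar, (0 : ℝ)) ∈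
        limNormalCone
          {q : WithLp 2 (EuclideanSpace ℝ (Fin m) × ℝ) |
            g ((WithLp.equiv 2 (EuclideanSpace ℝ (Fin m) × ℝ)) q).1 ≤
              ((((WithLp.equiv 2 (EuclideanSpace ℝ (Fin m) × ℝ)) q).2 : ℝ) : EReal)}
          ((WithLp.equiv 2 (EuclideanSpace ℝ (Fin m) × ℝ)).symm
            (zstar, (g zstar).toReal)) :=
  ALM_accumulation_is_stationary_for_infeasibility_general f c g hf hc hgproper hgbot hgpb θ κ hθ hκ
    Y hYbdd x z yh y μ etol hμ0 hyh hz hy hdual hμ1 hμupd hdomcl hetolbdd xstar φ hφ hconv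

end
end

section
/- Let f: ℝⁿ → ℝ and c: ℝⁿ → ℝᵐ be continuously differentiable, g: ℝᵐ → ℝ ∪ {∞} proper, lower semicontinuous and prox-bounded with threshold γ_g, and fix μ ∈ (0, γ_g) and ŷ ∈ ℝᵐ. Define F(x,z) := f(x) + ‖c(x) + μŷ − z‖²/(2μ) and P(x,z) := F(x,z) + g(z). Then P(x,z) is level-bounded in z locally uniformly in x: for each α ∈ ℝ and each x̄ ∈ ℝⁿ there exists ε > 0 such that the set {(x,z) : P(x,z) ≤ α, ‖x − x̄‖ ≤ ε} is bounded. -/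
open Filter Topology Bornology

noncomputable section

variable {H : Type*} [NormedAddCommGroup H] [InnerProductSpace ℝ H]

/-! Prox-boundedness at some `γ > μ` gives `g z ≥ b − ‖z‖²/(2γ)`, while for `‖u‖ ≤ R` the
penalty `‖u − z‖²/(2μ)` is at least `‖z‖²/(2μ) − R‖z‖/μ` once `‖z‖ ≥ R`. As `1/(2μ) > 1/(2γ)`,
`g z + ‖u − z‖²/(2μ)` is coercive in `z`, uniformly for bounded `u`. On the compact ball
`‖x − x̄‖ ≤ 1`, `f` is bounded below and `u = c(x) + μŷ` is bounded, so the sublevel sets of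
`P` over that ball are bounded. -/

lemma le_max_one_of_mul_sq_le {a b c t : ℝ} (ha : 0 < a)
    (h : a * t ^ 2 ≤ b * t + c) : t ≤ max 1 ((b + |c|) / a) := by
  rcases le_or_gt t 1 with ht | ht
  · exact le_max_of_le_left ht
  refine le_max_of_le_right ((le_div_iff₀ ha).2 ?_)
  have hct : c ≤ |c| * t := (le_abs_self c).trans (le_mul_of_one_le_right (abs_nonneg c) ht.le)
  nlinarith

lemma isBounded_setOf_sq_norm_sub_div_sub_le {E : Type*} [SeminormedAddCommGroup E]
    {μ γ : ℝ} (hμ : 0 < μ) (hμγ : μ < γ) (R C : ℝ) :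
    IsBounded {z : E | ∃ u, ‖u‖ ≤ R ∧ ‖u - z‖ ^ 2 / (2 * μ) - ‖z‖ ^ 2 / (2 * γ) ≤ C} := by
  set a := 1 / (2 * μ) - 1 / (2 * γ)
  have ha : 0 < a := sub_pos.2 (one_div_lt_one_div_of_lt (by positivity) (by linarith))
  refine isBounded_iff_forall_norm_le.2 ⟨max R (max 1 ((R / μ + |C|) / a)), ?_⟩
  rintro z ⟨u, hu, hz⟩
  rcases le_or_gt ‖z‖ R with hzR | hzR
  · exact le_max_of_le_left hzR
  have hR : 0 ≤ R := (norm_nonneg u).trans hu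
  have hdist : ‖z‖ - R ≤ ‖u - z‖ := by
    linarith [norm_sub_norm_le z u, norm_sub_rev z u]
  have hsq : (‖z‖ - R) ^ 2 / (2 * μ) ≤ ‖u - z‖ ^ 2 / (2 * μ) := by
    gcongr
  have hexpand : (‖z‖ - R) ^ 2 / (2 * μ) - ‖z‖ ^ 2 / (2 * γ)
      = a * ‖z‖ ^ 2 - R / μ * ‖z‖ + R ^ 2 / (2 * μ) := by
    simp only [a]
    field_simp
    ring
  have hR2 : 0 ≤ R ^ 2 / (2 * μ) := by positivity
  exact le_max_of_le_right (le_max_one_of_mul_sq_le ha (by linarith))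

lemma ProxBoundedAt.exists_add_le_of_coe_add_le {E : Type*} [NormedAddCommGroup E]
    {g : E → EReal} {γ : ℝ} (hg : ProxBoundedAt g γ) :
    ∃ b : ℝ, ∀ (r β : ℝ) (z : E), (r : EReal) + g z ≤ β → r + b ≤ β + ‖z‖ ^ 2 / (2 * γ) := by
  obtain ⟨b, hb⟩ := hg
  refine ⟨b, fun r β z h => ?_⟩
  have : ((r + b : ℝ) : EReal) ≤ ((β + ‖z‖ ^ 2 / (2 * γ) : ℝ) : EReal) :=
    calc ((r + b : ℝ) : EReal) = r + b := EReal.coe_add r b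
      _ ≤ r + (g z + ((‖z‖ ^ 2 / (2 * γ) : ℝ) : EReal)) := add_le_add_right (hb z) _
      _ = (r + g z) + ((‖z‖ ^ 2 / (2 * γ) : ℝ) : EReal) := (add_assoc _ _ _).symm
      _ ≤ β + ((‖z‖ ^ 2 / (2 * γ) : ℝ) : EReal) := add_le_add_left h _
      _ = ((β + ‖z‖ ^ 2 / (2 * γ) : ℝ) : EReal) := (EReal.coe_add _ _).symm
  exact_mod_cast this

theorem explicit_AL_level_bounded_general {n m : ℕ}
    (f : EuclideanSpace ℝ (Fin n) → ℝ)
    (c : EuclideanSpace ℝ (Fin n) → EuclideanSpace ℝ (Fin m))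
    (g : EuclideanSpace ℝ (Fin m) → EReal)
    (hf : ContDiff ℝ 1 f) (hc : ContDiff ℝ 1 c)
    (μ : ℝ) (hμpos : 0 < μ)
    -- μ lies strictly below the prox-boundedness threshold of g
    (hμthr : ∃ γ0 : ℝ, μ < γ0 ∧ ProxBoundedAt g γ0)
    (yh : EuclideanSpace ℝ (Fin m)) :
    ∀ (α : ℝ) (xb : EuclideanSpace ℝ (Fin n)), ∃ ε > (0 : ℝ),
      IsBounded {q : EuclideanSpace ℝ (Fin n) × EuclideanSpace ℝ (Fin m) |
        ((f q.1 + ‖c q.1 + μ • yh - q.2‖ ^ 2 / (2 * μ) : ℝ) : EReal) + g q.2 ≤ (α : EReal)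
          ∧ ‖q.1 - xb‖ ≤ ε} := by
  intro α xb
  obtain ⟨γ, hμγ, hg⟩ := hμthr
  obtain ⟨b, hb⟩ := hg.exists_add_le_of_coe_add_le
  have hK : IsCompact (Metric.closedBall xb 1) := isCompact_closedBall xb 1
  obtain ⟨fmin, hfmin⟩ := hK.bddBelow_image hf.continuous.continuousOn
  obtain ⟨R, hR⟩ := isBounded_iff_forall_norm_le.1
    (hK.image (hc.continuous.add continuous_const : Continuous fun x => c x + μ • yh)).isBounded
  refine ⟨1, one_pos, ((Metric.isBounded_closedBall (x := xb) (r := 1)).prod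
    (isBounded_setOf_sq_norm_sub_div_sub_le hμpos hμγ R (α - fmin - b))).subset ?_⟩
  rintro ⟨x, z⟩ ⟨hP, hx⟩
  have hxK : x ∈ Metric.closedBall xb 1 := mem_closedBall_iff_norm.2 hx
  refine ⟨hxK, c x + μ • yh, hR _ ⟨x, hxK, rfl⟩, ?_⟩
  linarith [hb _ _ _ hP, hfmin ⟨x, hxK, rfl⟩]

/-- For μ below the prox-boundedness threshold of g, the explicit AL
integrand P(x,z) = f(x) + ‖c(x)+μŷ−z‖²/(2μ) + g(z) is level-bounded in z locally
uniformly in x. -/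
theorem explicit_AL_level_bounded {n m : ℕ}
    (f : EuclideanSpace ℝ (Fin n) → ℝ)
    (c : EuclideanSpace ℝ (Fin n) → EuclideanSpace ℝ (Fin m))
    (g : EuclideanSpace ℝ (Fin m) → EReal)
    (hf : ContDiff ℝ 1 f) (hc : ContDiff ℝ 1 c)
    (hgproper : ∃ z, g z ≠ ⊤) (hgbot : ∀ z, g z ≠ ⊥)
    (hglsc : LowerSemicontinuous g)
    (μ : ℝ) (hμpos : 0 < μ)
    -- μ lies strictly below the prox-boundedness threshold of g
    (hμthr : ∃ γ0 : ℝ, μ < γ0 ∧ ProxBoundedAt g γ0)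
    (yh : EuclideanSpace ℝ (Fin m)) :
    ∀ (α : ℝ) (xb : EuclideanSpace ℝ (Fin n)), ∃ ε > (0 : ℝ),
      IsBounded {q : EuclideanSpace ℝ (Fin n) × EuclideanSpace ℝ (Fin m) |
        ((f q.1 + ‖c q.1 + μ • yh - q.2‖ ^ 2 / (2 * μ) : ℝ) : EReal) + g q.2 ≤ (α : EReal)
          ∧ ‖q.1 - xb‖ ≤ ε} :=
  explicit_AL_level_bounded_general f c g hf hc μ hμpos hμthr yh

end
end

section
/- Let f: ℝⁿ → ℝ and c: ℝⁿ → ℝᵐ be continuously differentiable, g: ℝᵐ → ℝ ∪ {∞} proper, lower semicontinuous and prox-bounded with threshold γ_g; fix μ ∈ (0, γ_g) and ŷ ∈ ℝᵐ, and set F(x,z) := f(x) + ‖c(x) + μŷ − z‖²/(2μ), p(x) := inf_z { F(x,z) + g(z) }, and O(x) := prox_{μg}(c(x) + μŷ). Let x ∈ ℝⁿ, z ∈ O(x), α ∈ (0,1), and let d ∈ ℝⁿ satisfy ⟨∇ₓF(x,z), d⟩ < 0. Then there exists γ̄ > 0 such that p(x + γd) ≤ p(x) + α γ ⟨∇ₓF(x,z),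 d⟩ for all γ ∈ (0, γ̄]; in particular, the backtracking linesearch of the nonmonotone descent method with oracle terminates after finitely many backtrackings. -/
open Filter Topology Bornology

noncomputable section

variable {H : Type*} [NormedAddCommGroup H] [InnerProductSpace ℝ H]

/-! Because `z` minimizes `F(x, ·) + g`, the infimum defining `p(x)` is attained at `z`, whereas
`p(x + γd) ≤ F(x + γd, z) + g(z)` for every step `γ`. The Armijo decrease of `p` is therefore
inherited from that of the smooth function `F(·, z)`, whose directional derivative along `d` is
negative. -/

theorem eventually_le_add_mul_of_hasDerivAt_zero {φ : ℝ → ℝ} {s α : ℝ} (hφ : HasDerivAt φ s 0)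
    (hs : s < 0) (hα : α < 1) : ∀ᶠ γ in 𝓝[>] 0, φ γ ≤ φ 0 + α * γ * s := by
  have hslope : ∀ᶠ γ in 𝓝[>] (0 : ℝ), γ⁻¹ • (φ (0 + γ) - φ 0) < α * s :=
    hφ.tendsto_slope_zero_right.eventually (gt_mem_nhds (by nlinarith))
  filter_upwards [hslope, self_mem_nhdsWithin] with γ hγ (hγpos : 0 < γ)
  rw [zero_add, smul_eq_mul, inv_mul_lt_iff₀ hγpos] at hγ
  linarith

theorem exists_forall_le_add_mul_fderiv_of_fderiv_neg {E : Type*} [NormedAddCommGroup E]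
    [NormedSpace ℝ E] {F : E → ℝ} {x d : E} {α : ℝ} (hF : DifferentiableAt ℝ F x)
    (hd : fderiv ℝ F x d < 0) (hα : α < 1) :
    ∃ γb > 0, ∀ γ : ℝ, 0 < γ → γ ≤ γb → F (x + γ • d) ≤ F x + α * γ * fderiv ℝ F x d := by
  have hline : HasDerivAt (fun γ : ℝ => x + γ • d) d 0 := by
    simpa using ((hasDerivAt_id (0 : ℝ)).smul_const d).const_add x
  have hφ : HasDerivAt (fun γ : ℝ => F (x + γ • d)) (fderiv ℝ F x d) 0 :=
    hF.hasFDerivAt.comp_hasDerivAt_of_eq 0 hline (by simp)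
  obtain ⟨γb, hγb, hsub⟩ := mem_nhdsGT_iff_exists_Ioc_subset.mp
    (eventually_le_add_mul_of_hasDerivAt_zero hφ hd hα)
  exact ⟨γb, hγb, fun γ hγ hγle => by simpa using hsub ⟨hγ, hγle⟩⟩

theorem iInf_add_sq_norm_div_add_eq_of_mem_proxSet {E : Type*} [NormedAddCommGroup E]
    {g : E → EReal} {γ a : ℝ} {u z : E} (hz : z ∈ proxSet g γ u) :
    ⨅ w, (((a + ‖u - w‖ ^ 2 / (2 * γ) : ℝ) : EReal) + g w) =
      ((a + ‖u - z‖ ^ 2 / (2 * γ) : ℝ) : EReal) + g z := by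
  refine le_antisymm (iInf_le _ z) (le_iInf fun w => ?_)
  have hzw := hz w
  rw [norm_sub_rev z, norm_sub_rev w] at hzw
  calc ((a + ‖u - z‖ ^ 2 / (2 * γ) : ℝ) : EReal) + g z
      = (a : EReal) + (g z + ((‖u - z‖ ^ 2 / (2 * γ) : ℝ) : EReal)) := by push_cast; abel
    _ ≤ (a : EReal) + (g w + ((‖u - w‖ ^ 2 / (2 * γ) : ℝ) : EReal)) := by gcongr
    _ = ((a + ‖u - w‖ ^ 2 / (2 * γ) : ℝ) : EReal) + g w := by push_cast; abel

theorem linesearch_terminates_general {n m : ℕ}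
    (f : EuclideanSpace ℝ (Fin n) → ℝ)
    (c : EuclideanSpace ℝ (Fin n) → EuclideanSpace ℝ (Fin m))
    (g : EuclideanSpace ℝ (Fin m) → EReal)
    (hf : ContDiff ℝ 1 f) (hc : ContDiff ℝ 1 c)
    (μ : ℝ)
    (yh : EuclideanSpace ℝ (Fin m))
    (x : EuclideanSpace ℝ (Fin n)) (z : EuclideanSpace ℝ (Fin m))
    (hz : z ∈ proxSet g μ (c x + μ • yh))
    (α : ℝ) (hα : α ∈ Set.Ioo (0 : ℝ) 1)
    (d : EuclideanSpace ℝ (Fin n))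
    (hd : (inner ℝ (gradient (fun x' => f x' + ‖c x' + μ • yh - z‖ ^ 2 / (2 * μ)) x) d : ℝ)
      < 0) :
    ∃ γb > (0 : ℝ), ∀ γ : ℝ, 0 < γ → γ ≤ γb →
      (⨅ w, (((f (x + γ • d) + ‖c (x + γ • d) + μ • yh - w‖ ^ 2 / (2 * μ) : ℝ) : EReal)
          + g w)) ≤
      (⨅ w, (((f x + ‖c x + μ • yh - w‖ ^ 2 / (2 * μ) : ℝ) : EReal) + g w)) +
        ((α * γ *
          (inner ℝ (gradient (fun x' => f x' + ‖c x' + μ • yh - z‖ ^ 2 / (2 * μ)) x) d : ℝ)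
          : ℝ) : EReal) := by
  set F := fun x' => f x' + ‖c x' + μ • yh - z‖ ^ 2 / (2 * μ)
  have hsq : DifferentiableAt ℝ (fun x' => ‖c x' + μ • yh - z‖ ^ 2) x :=
    (((hc.differentiable one_ne_zero x).add_const (μ • yh)).sub_const z).norm_sq ℝ
  have hF : DifferentiableAt ℝ F x := (hf.differentiable one_ne_zero x).add (by fun_prop)
  simp only [inner_gradient_left] at hd ⊢
  obtain ⟨γb, hγb, harmijo⟩ := exists_forall_le_add_mul_fderiv_of_fderiv_neg hF hd hα.2
  refine ⟨γb, hγb, fun γ hγ hγle => ?_⟩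
  rw [iInf_add_sq_norm_div_add_eq_of_mem_proxSet hz]
  calc _ ≤ ((F (x + γ • d) : ℝ) : EReal) + g z := iInf_le _ z
    _ ≤ ((F x + α * γ * fderiv ℝ F x d : ℝ) : EReal) + g z :=
        add_le_add_left (EReal.coe_le_coe_iff.mpr (harmijo γ hγ hγle)) _
    _ = ((F x : ℝ) : EReal) + g z + ((α * γ * fderiv ℝ F x d : ℝ) : EReal) := by
        rw [EReal.coe_add]; abel

/-- Armijo-type decrease of the implicit AL function p along a direction of
descent for the smooth part F(·, z) evaluated at an oracle point z ∈ O(x): the backtracking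
linesearch succeeds for all sufficiently small stepsizes. -/
theorem linesearch_terminates {n m : ℕ}
    (f : EuclideanSpace ℝ (Fin n) → ℝ)
    (c : EuclideanSpace ℝ (Fin n) → EuclideanSpace ℝ (Fin m))
    (g : EuclideanSpace ℝ (Fin m) → EReal)
    (hf : ContDiff ℝ 1 f) (hc : ContDiff ℝ 1 c)
    (hgproper : ∃ z, g z ≠ ⊤) (hgbot : ∀ z, g z ≠ ⊥)
    (hglsc : LowerSemicontinuous g)
    (μ : ℝ) (hμpos : 0 < μ)
    (hμthr : ∃ γ0 : ℝ, μ < γ0 ∧ ProxBoundedAt g γ0)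
    (yh : EuclideanSpace ℝ (Fin m))
    (x : EuclideanSpace ℝ (Fin n)) (z : EuclideanSpace ℝ (Fin m))
    (hz : z ∈ proxSet g μ (c x + μ • yh))
    (α : ℝ) (hα : α ∈ Set.Ioo (0 : ℝ) 1)
    (d : EuclideanSpace ℝ (Fin n))
    (hd : (inner ℝ (gradient (fun x' => f x' + ‖c x' + μ • yh - z‖ ^ 2 / (2 * μ)) x) d : ℝ)
      < 0) :
    ∃ γb > (0 : ℝ), ∀ γ : ℝ, 0 < γ → γ ≤ γb →
      (⨅ w, (((f (x + γ • d) + ‖c (x + γ • d) + μ • yh - w‖ ^ 2 / (2 * μ) : ℝ) : EReal)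
          + g w)) ≤
      (⨅ w, (((f x + ‖c x + μ • yh - w‖ ^ 2 / (2 * μ) : ℝ) : EReal) + g w)) +
        ((α * γ *
          (inner ℝ (gradient (fun x' => f x' + ‖c x' + μ • yh - z‖ ^ 2 / (2 * μ)) x) d : ℝ)
          : ℝ) : EReal) :=
  linesearch_terminates_general f c g hf hc μ yh x z hz α hα d hd

end
end

section
/- Consider the nonmonotone descent method with oracle applied to p, run with tolerance ε = 0, and suppose inf p ∈ ℝ. Then the sequences {Φⱼ} and {p(xʲ)} both converge to a common finite value p* ≥ inf p, and {Φⱼ} converges to p* from above (Φⱼ ≥ p* for all j). -/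
/-!
Every accepted step satisfies `p(xʲ⁺¹) ≤ Φⱼ`, since the Armijo term `α γⱼ ⟨∇pʲ, dʲ⟩` is
nonpositive for a descent direction. So `Φⱼ₊₁` is a convex combination of `Φⱼ` and a value
below `Φⱼ`: the merit values are nonincreasing, dominate `p(xʲ)`, and are bounded below by
`inf p`, hence converge. Solving the update for `p(xʲ⁺¹) = (Φⱼ₊₁ − (1 − ν) Φⱼ) / ν` shows that
the objective values have the same limit.
-/

open Filter Topology Bornology

noncomputable section

variable {H : Type*} [NormedAddCommGroup H] [InnerProductSpace ℝ H]

/-- Smooth part of the explicit AL function: `F(x,z) = f(x) + ‖c(x) + μŷ − z‖²/(2μ)`. -/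
def Ffun {n m : ℕ} (f : EuclideanSpace ℝ (Fin n) → ℝ)
    (c : EuclideanSpace ℝ (Fin n) → EuclideanSpace ℝ (Fin m))
    (μ : ℝ) (yh : EuclideanSpace ℝ (Fin m))
    (xx : EuclideanSpace ℝ (Fin n)) (zz : EuclideanSpace ℝ (Fin m)) : ℝ :=
  f xx + ‖c xx + μ • yh - zz‖ ^ 2 / (2 * μ)

/-- The implicit AL function: `p(x) = inf_z { F(x,z) + g(z) }`. -/
def pfun {n m : ℕ} (f : EuclideanSpace ℝ (Fin n) → ℝ)
    (c : EuclideanSpace ℝ (Fin n) → EuclideanSpace ℝ (Fin m))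
    (g : EuclideanSpace ℝ (Fin m) → EReal)
    (μ : ℝ) (yh : EuclideanSpace ℝ (Fin m)) (xx : EuclideanSpace ℝ (Fin n)) : EReal :=
  ⨅ zz, (((Ffun f c μ yh xx zz : ℝ) : EReal) + g zz)

/-- The partial gradient `∇ₓ F(x, z)`. -/
def gradF {n m : ℕ} (f : EuclideanSpace ℝ (Fin n) → ℝ)
    (c : EuclideanSpace ℝ (Fin n) → EuclideanSpace ℝ (Fin m))
    (μ : ℝ) (yh : EuclideanSpace ℝ (Fin m))
    (xx : EuclideanSpace ℝ (Fin n)) (zz : EuclideanSpace ℝ (Fin m)) :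
    EuclideanSpace ℝ (Fin n) :=
  gradient (fun x' => Ffun f c μ yh x' zz) xx

/-- The merit values `Φⱼ` as a function of the objective values `P j = p(xʲ)`. -/
def nonmonotoneMerit (ν : ℝ) (P : ℕ → ℝ) : ℕ → ℝ
  | 0 => P 0
  | j + 1 => (1 - ν) * nonmonotoneMerit ν P j + ν * P (j + 1)

section nonmonotoneMerit

variable {ν : ℝ} {P : ℕ → ℝ}

theorem nonmonotoneMerit_antitone (hν : 0 ≤ ν)
    (hP : ∀ j, P (j + 1) ≤ nonmonotoneMerit ν P j) : Antitone (nonmonotoneMerit ν P) :=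
  antitone_nat_of_succ_le fun j => by
    simp only [nonmonotoneMerit]
    nlinarith [hP j]

theorem le_nonmonotoneMerit (hν : ν ≤ 1) (hP : ∀ j, P (j + 1) ≤ nonmonotoneMerit ν P j)
    (j : ℕ) : P j ≤ nonmonotoneMerit ν P j := by
  cases j with
  | zero => exact le_rfl
  | succ j =>
    simp only [nonmonotoneMerit]
    nlinarith [hP j]

theorem tendsto_of_tendsto_nonmonotoneMerit (hν : ν ≠ 0) {L : ℝ}
    (h : Tendsto (nonmonotoneMerit ν P) atTop (𝓝 L)) : Tendsto P atTop (𝓝 L) := by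
  rw [← tendsto_add_atTop_iff_nat 1]
  have hlim := ((h.comp (tendsto_add_atTop_nat 1)).sub (h.const_mul (1 - ν))).div_const ν
  convert hlim using 2 with j
  · simp only [Function.comp, nonmonotoneMerit]
    field_simp
    ring
  · field_simp
    ring

theorem eq_coe_nonmonotoneMerit {Φ : ℕ → EReal} (h0 : Φ 0 = P 0)
    (hrec : ∀ j, Φ (j + 1) = ((1 - ν : ℝ) : EReal) * Φ j + (ν : EReal) * P (j + 1)) (j : ℕ) :
    Φ j = nonmonotoneMerit ν P j := by
  induction j with
  | zero => exact h0
  | succ j ih =>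
    rw [hrec, ih, nonmonotoneMerit]
    norm_cast

end nonmonotoneMerit

theorem le_of_le_add_descent_term {a Φ : EReal} {α γ θ : ℝ} {v d : H} (hα : 0 ≤ α)
    (hγ : 0 ≤ γ) (hθ : 0 ≤ θ) (hdir : inner ℝ v d ≤ -(θ * (‖v‖ * ‖d‖)))
    (h : a ≤ Φ + ((α * γ * inner ℝ v d : ℝ) : EReal)) : a ≤ Φ := by
  have hvd : inner ℝ v d ≤ 0 := hdir.trans (neg_nonpos.mpr (by positivity))
  have hterm : α * γ * inner ℝ v d ≤ 0 := mul_nonpos_of_nonneg_of_nonpos (by positivity) hvd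
  exact h.trans (add_le_of_nonpos_right (by exact_mod_cast hterm))

theorem pfun_ne_top {n m : ℕ} {f : EuclideanSpace ℝ (Fin n) → ℝ}
    {c : EuclideanSpace ℝ (Fin n) → EuclideanSpace ℝ (Fin m)}
    {g : EuclideanSpace ℝ (Fin m) → EReal} {μ : ℝ} {yh : EuclideanSpace ℝ (Fin m)}
    (hg : ∃ z, g z ≠ ⊤) (x : EuclideanSpace ℝ (Fin n)) : pfun f c g μ yh x ≠ ⊤ := by
  obtain ⟨z, hz⟩ := hg
  exact ne_top_of_le_ne_top (EReal.add_lt_top (EReal.coe_ne_top _) hz).ne (iInf_le _ z)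

theorem descent_method_values_converge_general {n m : ℕ}
    (f : EuclideanSpace ℝ (Fin n) → ℝ)
    (c : EuclideanSpace ℝ (Fin n) → EuclideanSpace ℝ (Fin m))
    (g : EuclideanSpace ℝ (Fin m) → EReal)
    (hgproper : ∃ z, g z ≠ ⊤)
    (μ : ℝ)
    (yh : EuclideanSpace ℝ (Fin m))
    -- parameters of the descent method
    (α β θ ω ν : ℝ)
    (hα : α ∈ Set.Ioo (0 : ℝ) 1) (hβ : β ∈ Set.Ioo (0 : ℝ) 1)
    (hθ : θ ∈ Set.Ioo (0 : ℝ) 1)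
    (hν : ν ∈ Set.Ioc (0 : ℝ) 1)
    -- iterates of the method (run with tolerance ε = 0, never terminating)
    (x : ℕ → EuclideanSpace ℝ (Fin n)) (zs : ℕ → EuclideanSpace ℝ (Fin m))
    (d : ℕ → EuclideanSpace ℝ (Fin n)) (γ : ℕ → ℝ) (l : ℕ → ℕ) (Φ : ℕ → EReal)
    (hΦ0 : Φ 0 = pfun f c g μ yh (x 0))
    (hdir : ∀ j, (inner ℝ (gradF f c μ yh (x j) (zs j)) (d j) : ℝ) ≤
        -(θ * (‖gradF f c μ yh (x j) (zs j)‖ * ‖d j‖)) ∧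
      ω * ‖gradF f c μ yh (x j) (zs j)‖ ≤ ‖d j‖)
    (hγ : ∀ j, γ j = β ^ l j)
    (hls : ∀ j, pfun f c g μ yh (x j + γ j • d j) ≤
      Φ j + ((α * γ j * (inner ℝ (gradF f c μ yh (x j) (zs j)) (d j) : ℝ) : ℝ) : EReal))
    (hxupd : ∀ j, pfun f c g μ yh (x (j + 1)) ≤ pfun f c g μ yh (x j + γ j • d j))
    (hΦupd : ∀ j, Φ (j + 1) =
      ((1 - ν : ℝ) : EReal) * Φ j + ((ν : ℝ) : EReal) * pfun f c g μ yh (x (j + 1)))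
    -- inf p ∈ ℝ
    (hinf : ∃ b : ℝ, ∀ x', (b : EReal) ≤ pfun f c g μ yh x')
    : ∃ pstar : ℝ,
      Tendsto Φ atTop (𝓝 ((pstar : ℝ) : EReal)) ∧
      Tendsto (fun j => pfun f c g μ yh (x j)) atTop (𝓝 ((pstar : ℝ) : EReal)) ∧
      (⨅ x', pfun f c g μ yh x') ≤ ((pstar : ℝ) : EReal) ∧
      ∀ j, ((pstar : ℝ) : EReal) ≤ Φ j := by
  obtain ⟨b, hb⟩ := hinf
  set P : ℕ → ℝ := fun j => (pfun f c g μ yh (x j)).toReal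
  have hP : ∀ j, pfun f c g μ yh (x j) = P j := fun j =>
    (EReal.coe_toReal (pfun_ne_top hgproper _)
      (ne_bot_of_le_ne_bot (EReal.coe_ne_bot b) (hb _))).symm
  have hΦ : ∀ j, Φ j = nonmonotoneMerit ν P j :=
    eq_coe_nonmonotoneMerit (by rw [hΦ0, hP]) fun j => by rw [hΦupd, hP]
  have hdesc : ∀ j, P (j + 1) ≤ nonmonotoneMerit ν P j := fun j => by
    have hγj : 0 ≤ γ j := by rw [hγ]; exact pow_nonneg hβ.1.le _
    have := le_of_le_add_descent_term hα.1.le hγj hθ.1.le (hdir j).1 ((hxupd j).trans (hls j))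
    rwa [hP, hΦ, EReal.coe_le_coe_iff] at this
  have hbP : ∀ j, b ≤ P j := fun j => by exact_mod_cast (hP j) ▸ hb (x j)
  have hbdd : BddBelow (Set.range (nonmonotoneMerit ν P)) := ⟨b, by
    rintro _ ⟨j, rfl⟩
    exact (hbP j).trans (le_nonmonotoneMerit hν.2 hdesc j)⟩
  have hΦlim := tendsto_atTop_ciInf (nonmonotoneMerit_antitone hν.1.le hdesc) hbdd
  have hPlim := EReal.tendsto_coe.mpr (tendsto_of_tendsto_nonmonotoneMerit hν.1.ne' hΦlim)
  simp only [← hP] at hPlim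
  refine ⟨⨅ j, nonmonotoneMerit ν P j, ?_, hPlim, ?_, fun j => ?_⟩
  · exact (EReal.tendsto_coe.mpr hΦlim).congr fun j => (hΦ j).symm
  · exact ge_of_tendsto' hPlim fun j => iInf_le _ (x j)
  · rw [hΦ]
    exact EReal.coe_le_coe_iff.mpr (ciInf_le hbdd j)

/-- The merit values Φⱼ and the objective values p(xʲ) of the
nonmonotone descent method with oracle converge to a common finite value p* ≥ inf p,
the former from above. -/
theorem descent_method_values_converge {n m : ℕ}
    (f : EuclideanSpace ℝ (Fin n) → ℝ)
    (c : EuclideanSpace ℝ (Fin n) → EuclideanSpace ℝ (Fin m))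
    (g : EuclideanSpace ℝ (Fin m) → EReal)
    (hf : ContDiff ℝ 1 f) (hc : ContDiff ℝ 1 c)
    (hgproper : ∃ z, g z ≠ ⊤) (hgbot : ∀ z, g z ≠ ⊥)
    (hglsc : LowerSemicontinuous g)
    (μ : ℝ) (hμpos : 0 < μ)
    (hμthr : ∃ γ0 : ℝ, μ < γ0 ∧ ProxBoundedAt g γ0)
    (yh : EuclideanSpace ℝ (Fin m))
    -- parameters of the descent method
    (α β θ ω ν : ℝ)
    (hα : α ∈ Set.Ioo (0 : ℝ) 1) (hβ : β ∈ Set.Ioo (0 : ℝ) 1)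
    (hθ : θ ∈ Set.Ioo (0 : ℝ) 1)
    (hω : ω ∈ Set.Ioc (0 : ℝ) 1) (hν : ν ∈ Set.Ioc (0 : ℝ) 1)
    -- iterates of the method (run with tolerance ε = 0, never terminating)
    (x : ℕ → EuclideanSpace ℝ (Fin n)) (zs : ℕ → EuclideanSpace ℝ (Fin m))
    (d : ℕ → EuclideanSpace ℝ (Fin n)) (γ : ℕ → ℝ) (l : ℕ → ℕ) (Φ : ℕ → EReal)
    (hΦ0 : Φ 0 = pfun f c g μ yh (x 0))
    (hzs : ∀ j, zs j ∈ proxSet g μ (c (x j) + μ • yh))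
    (hne : ∀ j, gradF f c μ yh (x j) (zs j) ≠ 0)
    (hdir : ∀ j, (inner ℝ (gradF f c μ yh (x j) (zs j)) (d j) : ℝ) ≤
        -(θ * (‖gradF f c μ yh (x j) (zs j)‖ * ‖d j‖)) ∧
      ω * ‖gradF f c μ yh (x j) (zs j)‖ ≤ ‖d j‖)
    (hγ : ∀ j, γ j = β ^ l j)
    (hls : ∀ j, pfun f c g μ yh (x j + γ j • d j) ≤
      Φ j + ((α * γ j * (inner ℝ (gradF f c μ yh (x j) (zs j)) (d j) : ℝ) : ℝ) : EReal))
    (hlargest : ∀ j, ∀ l' < l j, ¬ (pfun f c g μ yh (x j + β ^ l' • d j) ≤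
      Φ j + ((α * β ^ l' * (inner ℝ (gradF f c μ yh (x j) (zs j)) (d j) : ℝ) : ℝ) : EReal)))
    (hxupd : ∀ j, pfun f c g μ yh (x (j + 1)) ≤ pfun f c g μ yh (x j + γ j • d j))
    (hΦupd : ∀ j, Φ (j + 1) =
      ((1 - ν : ℝ) : EReal) * Φ j + ((ν : ℝ) : EReal) * pfun f c g μ yh (x (j + 1)))
    -- inf p ∈ ℝ
    (hinf : ∃ b : ℝ, ∀ x', (b : EReal) ≤ pfun f c g μ yh x')
    : ∃ pstar : ℝ,
      Tendsto Φ atTop (𝓝 ((pstar : ℝ) : EReal)) ∧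
      Tendsto (fun j => pfun f c g μ yh (x j)) atTop (𝓝 ((pstar : ℝ) : EReal)) ∧
      (⨅ x', pfun f c g μ yh x') ≤ ((pstar : ℝ) : EReal) ∧
      ∀ j, ((pstar : ℝ) : EReal) ≤ Φ j :=
  descent_method_values_converge_general f c g hgproper μ yh α β θ ω ν hα hβ hθ hν x zs d γ l Φ hΦ0
    hdir hγ hls hxupd hΦupd hinf

end
end
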